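/- arXiv:1306.1069 — 5 statements merged into one kernel-verified Lean document; each statement's English description precedes it below -/
import Mathlib

section
/- For a level-2 higher-order counter automaton without zero-test, the pushdown storage is monotone: if a run r starts in configuration (q, s·(σ,n)) and ends in control state q', and the topmost counter value of every configuration along r is at least m, then for every n' ≥ n − m there is a run starting in (q, s·(σ,n')) that performs exactly the same sequence of transitions and ends in state q'. -/
/-!  Level-2 higher-order counter automata without zero-test (2-HOCA).
Storage configurations are nonempty lists in `(Sig × ℕ)`, head = topmost entry. -/

namespace HOCA

/-- Operations of a 2-HOCA without zero-test: level-2 pop, level-2 push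
(duplicating the topmost counter under a new symbol), increment of the
topmost counter (`stay(push⊥)`), decrement of the topmost counter
(`stay(pop)`, undefined at 0), and the identity. -/
inductive HOp (Sig : Type) where
  | pop : HOp Sig
  | push (τ : Sig) : HOp Sig
  | inc : HOp Sig
  | dec : HOp Sig
  | id : HOp Sig

/-- Partial application of an operation to a storage. -/
def applyOp {Sig : Type} : HOp Sig → List (Sig × ℕ) → Option (List (Sig × ℕ))
  | .pop, _ :: t :: s => some (t :: s)
  | .pop, _ => none
  | .push τ, (σ, n) :: s => some ((τ, n) :: (σ, n) :: s)
  | .push _, [] => none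
  | .inc, (σ, n) :: s => some ((σ, n + 1) :: s)
  | .inc, [] => none
  | .dec, (σ, n + 1) :: s => some ((σ, n) :: s)
  | .dec, _ => none
  | .id, s => some s

/-- A 2-HOCA without zero-test: a transition relation; a transition
`Δ q σ op q'` is applicable in state `q` when the topmost symbol is `σ`
(the only tests are top-symbol tests). -/
structure Aut (Q Sig : Type) where
  Δ : Q → Sig → HOp Sig → Q → Prop

abbrev Config (Q Sig : Type) := Q × List (Sig × ℕ)

/-- `IsRun A L cfg lab` : the configurations `cfg 0, …, cfg L` form a run of `A`,
where the `i`-th step tests top-symbol `(lab i).1` and applies operation `(lab i).2`. -/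
def IsRun {Q Sig : Type} (A : Aut Q Sig) (L : ℕ) (cfg : ℕ → Config Q Sig)
    (lab : ℕ → Sig × HOp Sig) : Prop :=
  ∀ i < L, ∃ (n : ℕ) (rest : List (Sig × ℕ)),
    (cfg i).2 = ((lab i).1, n) :: rest ∧
    A.Δ (cfg i).1 (lab i).1 (lab i).2 (cfg (i + 1)).1 ∧
    applyOp (lab i).2 (cfg i).2 = some (cfg (i + 1)).2

/-- The run increases the height by at most `k` (for `k = ⊤`: no bound). -/
def heightBounded {Q Sig : Type} (k : ℕ∞) (L : ℕ) (cfg : ℕ → Config Q Sig) : Prop :=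
  ∀ i ≤ L, ((cfg i).2.length : ℕ∞) ≤ ((cfg 0).2.length : ℕ∞) + k

/-- `Ret_k((σ,m))` : pairs `(q,q')` such that there is a return from
`(q, (σ,m)·s)` to `(q', s)` increasing the height by at most `k`
(the final configuration is the first one whose storage is `s`). -/
def RetSet {Q Sig : Type} (A : Aut Q Sig) (k : ℕ∞) (σ : Sig) (m : ℕ) :
    Set (Q × Q) :=
  { p | ∃ (s : List (Sig × ℕ)) (L : ℕ) (cfg : ℕ → Config Q Sig)
      (lab : ℕ → Sig × HOp Sig),
      s ≠ [] ∧ IsRun A L cfg lab ∧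
      cfg 0 = (p.1, (σ, m) :: s) ∧ cfg L = (p.2, s) ∧
      (∀ i < L, (cfg i).2 ≠ s) ∧ heightBounded k L cfg }

/-- `Loop_k((σ,m))` : pairs `(q,q')` such that there is a loop from
`(q, (σ,m)·s)` to `(q', (σ,m)·s)` never visiting storage `s`,
increasing the height by at most `k`. -/
def LoopSet {Q Sig : Type} (A : Aut Q Sig) (k : ℕ∞) (σ : Sig) (m : ℕ) :
    Set (Q × Q) :=
  { p | ∃ (s : List (Sig × ℕ)) (L : ℕ) (cfg : ℕ → Config Q Sig)
      (lab : ℕ → Sig × HOp Sig),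
      IsRun A L cfg lab ∧
      cfg 0 = (p.1, (σ, m) :: s) ∧ cfg L = (p.2, (σ, m) :: s) ∧
      (∀ i ≤ L, (cfg i).2 ≠ s) ∧ heightBounded k L cfg }

end HOCA

/-- Monotonicity of the level-2 counter storage: if a run of a
2-HOCA without zero-test starts in `(q, (σ,n)·s)`, ends in control state `q'`,
and the topmost counter of every configuration along the run is at least `m`,
then for every `n' ≥ n - m` there is a run starting in `(q, (σ,n')·s)` that
performs exactly the same sequence of transitions and ends in state `q'`. -/
theorem hoca_storage_monotone {Q Sig : Type} (A : HOCA.Aut Q Sig)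
    (L : ℕ) (cfg : ℕ → HOCA.Config Q Sig) (lab : ℕ → Sig × HOCA.HOp Sig)
    (q q' : Q) (s : List (Sig × ℕ)) (σ : Sig) (n m : ℕ)
    (hrun : HOCA.IsRun A L cfg lab)
    (hstart : cfg 0 = (q, (σ, n) :: s))
    (hend : (cfg L).1 = q')
    (htop : ∀ i ≤ L, ∃ (τ : Sig) (k : ℕ) (rest : List (Sig × ℕ)),
      (cfg i).2 = (τ, k) :: rest ∧ m ≤ k) :
    ∀ n' : ℕ, n - m ≤ n' →
      ∃ cfg' : ℕ → HOCA.Config Q Sig,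
        HOCA.IsRun A L cfg' lab ∧
        cfg' 0 = (q, (σ, n') :: s) ∧
        (cfg' L).1 = q' ∧
        ∀ i ≤ L, (cfg' i).1 = (cfg i).1 := by
  intro n' hn'
  have hnm : n ≤ n' + m := by omega
  -- entry relation: equal, or shifted (with original value ≥ m)
  set R : (Sig × ℕ) → (Sig × ℕ) → Prop :=
    fun e e' => e'.1 = e.1 ∧ (e'.2 = e.2 ∨ (m ≤ e.2 ∧ e'.2 + n = e.2 + n')) with hRdef
  have hRrefl : ∀ l : List (Sig × ℕ), List.Forall₂ R l l := by
    intro l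
    induction l with
    | nil => exact .nil
    | cons x t ih => exact .cons ⟨rfl, Or.inl rfl⟩ ih
  -- step lemma
  have step : ∀ (op : HOCA.HOp Sig) (a b a' : List (Sig × ℕ)),
      List.Forall₂ R a a' → HOCA.applyOp op a = some b →
      (∀ τ k rest, b = (τ, k) :: rest → m ≤ k) →
      ∃ b', HOCA.applyOp op a' = some b' ∧ List.Forall₂ R b b' := by
    intro op a b a' hrel happ htopb
    cases op with
    | pop =>
      match a, a', hrel with
      | x :: y :: t, x' :: y' :: t', .cons hx (.cons hy ht) =>
        simp only [HOCA.applyOp, Option.some.injEq] at happ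
        exact ⟨y' :: t', rfl, happ ▸ .cons hy ht⟩
    | push τ =>
      match a, a', hrel with
      | (σ₀, k) :: t, (σ₀', k') :: t', .cons hx ht =>
        simp only [HOCA.applyOp, Option.some.injEq] at happ
        exact ⟨(τ, k') :: (σ₀', k') :: t', rfl,
          happ ▸ .cons ⟨rfl, hx.2⟩ (.cons hx ht)⟩
    | inc =>
      match a, a', hrel with
      | (σ₀, k) :: t, (σ₀', k') :: t', .cons hx ht =>
        simp only [HOCA.applyOp, Option.some.injEq] at happ
        refine ⟨(σ₀', k' + 1) :: t', rfl, happ ▸ .cons ⟨hx.1, ?_⟩ ht⟩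
        rcases hx.2 with h | h
        · exact Or.inl (by omega)
        · exact Or.inr ⟨by omega, by omega⟩
    | dec =>
      match a, a', hrel with
      | (σ₀, 0) :: t, _, _ => simp [HOCA.applyOp] at happ
      | (σ₀, k + 1) :: t, (σ₀', k') :: t', .cons hx ht =>
        simp only [HOCA.applyOp, Option.some.injEq] at happ
        have hmk : m ≤ k := htopb σ₀ k t happ.symm
        have hk' : 1 ≤ k' := by
          rcases hx.2 with h | h
          · omega
          · omega
        obtain ⟨k'', rfl⟩ : ∃ k'', k' = k'' + 1 := ⟨k' - 1, by omega⟩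
        refine ⟨(σ₀', k'') :: t', rfl, happ ▸ .cons ⟨hx.1, ?_⟩ ht⟩
        rcases hx.2 with h | h
        · exact Or.inl (by omega)
        · exact Or.inr ⟨hmk, by omega⟩
      | [], _, _ => simp [HOCA.applyOp] at happ
    | id =>
      simp only [HOCA.applyOp, Option.some.injEq] at happ
      exact ⟨a', rfl, happ ▸ hrel⟩
  -- the new storage sequence
  set stk : ℕ → List (Sig × ℕ) :=
    fun i => Nat.rec ((σ, n') :: s)
      (fun j st => (HOCA.applyOp (lab j).2 st).getD []) i with hstk
  have stk0 : stk 0 = (σ, n') :: s := rfl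
  have stkS : ∀ i, stk (i + 1) = (HOCA.applyOp (lab i).2 (stk i)).getD [] :=
    fun i => rfl
  -- key invariant
  have key : ∀ i, i ≤ L → List.Forall₂ R (cfg i).2 (stk i) := by
    intro i
    induction i with
    | zero =>
      intro _
      have := htop 0 (Nat.zero_le L)
      obtain ⟨τ, k, rest, hEq, hmk⟩ := this
      rw [hstart] at hEq
      have hτ : τ = σ ∧ k = n ∧ rest = s := by
        constructor
        · exact (Prod.mk.injEq .. ▸ (List.cons.injEq .. ▸ hEq).1).1.symm
        · exact ⟨((Prod.mk.injEq .. ▸ (List.cons.injEq .. ▸ hEq).1).2).symm,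
            ((List.cons.injEq .. ▸ hEq).2).symm⟩
      rw [hstart, stk0]
      exact .cons ⟨rfl, Or.inr ⟨hτ.2.1 ▸ hmk, by omega⟩⟩ (hRrefl s)
    | succ i ih =>
      intro hiL
      have hi : i < L := hiL
      obtain ⟨n₀, rest₀, hhd, hΔ, happ⟩ := hrun i hi
      have hrel := ih (Nat.le_of_lt hi)
      have htopb : ∀ τ k rest, (cfg (i+1)).2 = (τ, k) :: rest → m ≤ k := by
        intro τ k rest hEq
        obtain ⟨τ', k', rest', hEq', hmk⟩ := htop (i+1) hiL
        rw [hEq] at hEq'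
        have : k = k' := (Prod.mk.injEq .. ▸ (List.cons.injEq .. ▸ hEq').1).2
        omega
      obtain ⟨b', hb', hrelb⟩ := step (lab i).2 (cfg i).2 (cfg (i+1)).2 (stk i)
        hrel happ htopb
      rw [stkS i, hb']
      exact hrelb
  have keyStep : ∀ i, i < L →
      HOCA.applyOp (lab i).2 (stk i) = some (stk (i + 1)) := by
    intro i hi
    obtain ⟨n₀, rest₀, hhd, hΔ, happ⟩ := hrun i hi
    have htopb : ∀ τ k rest, (cfg (i+1)).2 = (τ, k) :: rest → m ≤ k := by
      intro τ k rest hEq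
      obtain ⟨τ', k', rest', hEq', hmk⟩ := htop (i+1) hi
      rw [hEq] at hEq'
      have : k = k' := (Prod.mk.injEq .. ▸ (List.cons.injEq .. ▸ hEq').1).2
      omega
    obtain ⟨b', hb', hrelb⟩ := step (lab i).2 (cfg i).2 (cfg (i+1)).2 (stk i)
      (key i (Nat.le_of_lt hi)) happ htopb
    rw [stkS i, hb', Option.getD_some]
  refine ⟨fun i => ((cfg i).1, stk i), ?_, ?_, hend, fun i _ => rfl⟩
  · intro i hi
    obtain ⟨n₀, rest₀, hhd, hΔ, happ⟩ := hrun i hi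
    have hrel := key i (Nat.le_of_lt hi)
    rw [hhd] at hrel
    rcases List.forall₂_cons_left_iff.mp hrel with ⟨⟨τ', k'⟩, t', hx, ht, heq⟩
    have hτ : τ' = (lab i).1 := hx.1
    refine ⟨k', t', ?_, hΔ, keyStep i hi⟩
    show stk i = ((lab i).1, k') :: t'
    rw [heq, hτ]
  · show ((cfg 0).1, stk 0) = (q, (σ, n') :: s)
    rw [hstart, stk0]
end

section
/- For a level-2 higher-order counter automaton without zero-test, returns and loops are monotone in the topmost counter value: for all k ∈ ℕ ∪ {∞}, all σ ∈ Σ and all m₁ ≤ m₂, Ret_k((σ,m₁)) ⊆ Ret_k((σ,m₂)) and Loop_k((σ,m₁)) ⊆ Loop_k((σ,m₂)). -/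
namespace HOCA

variable {Q Sig : Type}

/-- bump the counter by `d`. -/
def bump (d : ℕ) : Sig × ℕ → Sig × ℕ := fun x => (x.1, x.2 + d)

lemma suffix_inv (A : Aut Q Sig) (L : ℕ) (cfg : ℕ → Config Q Sig)
    (lab : ℕ → Sig × HOp Sig) (s p₀ : List (Sig × ℕ))
    (hrun : IsRun A L cfg lab) (h0 : (cfg 0).2 = p₀ ++ s)
    (hne : ∀ i < L, (cfg i).2 ≠ s) :
    ∀ i ≤ L, ∃ p, (cfg i).2 = p ++ s := by
  intro i
  induction i with
  | zero => intro _; exact ⟨p₀, h0⟩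
  | succ i ih =>
    intro hiL
    have hi : i < L := hiL
    obtain ⟨p, hp⟩ := ih (le_of_lt hi)
    have hpne : p ≠ [] := by
      rintro rfl; exact hne i hi (by simpa using hp)
    obtain ⟨n, rest, heq, hΔ, happ⟩ := hrun i hi
    obtain ⟨a, p', rfl⟩ : ∃ a p', p = a :: p' := by
      cases p with
      | nil => exact absurd rfl hpne
      | cons a p' => exact ⟨a, p', rfl⟩
    have key : a = ((lab i).1, n) ∧ p' ++ s = rest := by
      have h := hp.symm.trans heq
      simp only [List.cons_append, List.cons.injEq] at h
      exact h
    obtain ⟨rfl, hrest⟩ := key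
    rw [heq] at happ
    cases hop : (lab i).2 with
    | pop =>
      rw [hop] at happ
      cases rest with
      | nil => simp [applyOp] at happ
      | cons t s' =>
        simp only [applyOp, Option.some.injEq] at happ
        exact ⟨p', by rw [← happ, hrest]⟩
    | push τ =>
      rw [hop] at happ
      simp only [applyOp, Option.some.injEq] at happ
      exact ⟨(τ, n) :: ((lab i).1, n) :: p', by rw [← happ, ← hrest]; simp⟩
    | inc =>
      rw [hop] at happ
      simp only [applyOp, Option.some.injEq] at happ
      exact ⟨((lab i).1, n + 1) :: p', by rw [← happ, ← hrest]; simp⟩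
    | dec =>
      rw [hop] at happ
      cases n with
      | zero => simp [applyOp] at happ
      | succ n₀ =>
        simp only [applyOp, Option.some.injEq] at happ
        exact ⟨((lab i).1, n₀) :: p', by rw [← happ, ← hrest]; simp⟩
    | id =>
      rw [hop] at happ
      simp only [applyOp, Option.some.injEq] at happ
      exact ⟨((lab i).1, n) :: p', by rw [← happ, ← hrest]; simp⟩

lemma transform (A : Aut Q Sig) (L : ℕ) (cfg : ℕ → Config Q Sig)
    (lab : ℕ → Sig × HOp Sig) (s : List (Sig × ℕ)) (d : ℕ)
    (hrun : IsRun A L cfg lab)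
    (hne : ∀ i < L, (cfg i).2 ≠ s)
    (hnonnil : ∀ i ≤ L, (cfg i).2 ≠ [])
    (P : ℕ → List (Sig × ℕ))
    (hP : ∀ i ≤ L, (cfg i).2 = P i ++ s) :
    IsRun A L (fun i => ((cfg i).1, (P i).map (bump d) ++ s)) lab := by
  intro i hi
  obtain ⟨n, rest, heq, hΔ, happ⟩ := hrun i hi
  have hpi := hP i (le_of_lt hi)
  have hpi1 := hP (i + 1) hi
  have hpne : P i ≠ [] := by
    intro h; exact hne i hi (by rw [hpi, h]; simp)
  obtain ⟨a, p', hcons⟩ : ∃ a p', P i = a :: p' := by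
    cases hPi : P i with
    | nil => exact absurd hPi hpne
    | cons a p' => exact ⟨a, p', rfl⟩
  have key : a = ((lab i).1, n) ∧ p' ++ s = rest := by
    have h := hpi.symm.trans heq
    rw [hcons] at h
    simp only [List.cons_append, List.cons.injEq] at h
    exact h
  obtain ⟨rfl, hrest⟩ := key
  rw [heq] at happ
  refine ⟨n + d, (p'.map (bump d)) ++ s, by simp [hcons, bump], hΔ, ?_⟩
  have hcancel : ∀ (x y : List (Sig × ℕ)), x ++ s = y ++ s → x = y := by
    intro x y h; exact List.append_cancel_right h
  cases hop : (lab i).2 with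
  | pop =>
    rw [hop] at happ
    cases rest with
    | nil => simp [applyOp] at happ
    | cons t s' =>
      simp only [applyOp, Option.some.injEq] at happ
      have hP1 : P (i + 1) = p' := by
        apply hcancel
        rw [← hpi1, ← happ, hrest]
      cases hms : p'.map (bump d) ++ s with
      | nil =>
        exfalso
        have : p' = [] ∧ s = [] := by
          constructor
          · cases p' with
            | nil => rfl
            | cons _ _ => simp at hms
          · cases p' with
            | nil => simpa using hms
            | cons _ _ => simp at hms
        apply hnonnil (i + 1) hi
        rw [hpi1, hP1, this.1, this.2]; rfl
      | cons u us =>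
        simp only [hcons, List.map_cons, List.cons_append, hms, applyOp,
          Option.some.injEq, hP1]
  | push τ =>
    rw [hop] at happ
    simp only [applyOp, Option.some.injEq] at happ
    have hP1 : P (i + 1) = (τ, n) :: ((lab i).1, n) :: p' := by
      apply hcancel
      rw [← hpi1, ← happ, ← hrest]; simp
    simp [hcons, hP1, applyOp, bump]
  | inc =>
    rw [hop] at happ
    simp only [applyOp, Option.some.injEq] at happ
    have hP1 : P (i + 1) = ((lab i).1, n + 1) :: p' := by
      apply hcancel
      rw [← hpi1, ← happ, ← hrest]; simp
    have harith : n + 1 + d = (n + d) + 1 := by omega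
    simp only [hcons, hP1, List.map_cons, List.cons_append, bump, applyOp,
      Option.some.injEq, harith]
  | dec =>
    rw [hop] at happ
    cases n with
    | zero => simp [applyOp] at happ
    | succ n₀ =>
      simp only [applyOp, Option.some.injEq] at happ
      have hP1 : P (i + 1) = ((lab i).1, n₀) :: p' := by
        apply hcancel
        rw [← hpi1, ← happ, ← hrest]; simp
      have harith : n₀ + 1 + d = (n₀ + d) + 1 := by omega
      simp only [hcons, hP1, List.map_cons, List.cons_append, bump, harith,
        applyOp, Option.some.injEq]
  | id =>
    rw [hop] at happ
    simp only [applyOp, Option.some.injEq] at happ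
    have hP1 : P (i + 1) = ((lab i).1, n) :: p' := by
      apply hcancel
      rw [← hpi1, ← happ, ← hrest]; simp
    simp [hcons, hP1, applyOp]

end HOCA

/-- Returns and loops of a 2-HOCA without zero-test are
monotone in the topmost counter value: for all `k ∈ ℕ ∪ {∞}`, all `σ ∈ Σ` and
all `m₁ ≤ m₂`, `Ret_k((σ,m₁)) ⊆ Ret_k((σ,m₂))` and
`Loop_k((σ,m₁)) ⊆ Loop_k((σ,m₂))`. -/
theorem hoca_ret_loop_monotone {Q Sig : Type} (A : HOCA.Aut Q Sig) :
    ∀ (k : ℕ∞) (σ : Sig) (m₁ m₂ : ℕ), m₁ ≤ m₂ →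
      HOCA.RetSet A k σ m₁ ⊆ HOCA.RetSet A k σ m₂ ∧
      HOCA.LoopSet A k σ m₁ ⊆ HOCA.LoopSet A k σ m₂ := by
  classical
  intro k σ m₁ m₂ hm
  set d := m₂ - m₁ with hd
  have hmd : m₁ + d = m₂ := Nat.add_sub_cancel' hm
  constructor
  · rintro ⟨q, q'⟩ ⟨s, L, cfg, lab, hs, hrun, h0, hL, hneq, hb⟩
    have h0' : (cfg 0).2 = [(σ, m₁)] ++ s := by rw [h0]; rfl
    have hsuf := HOCA.suffix_inv A L cfg lab s [(σ, m₁)] hrun h0' hneq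
    set P : ℕ → List (Sig × ℕ) :=
      fun i => if h : i ≤ L then (hsuf i h).choose else [] with hPdef
    have hP : ∀ i ≤ L, (cfg i).2 = P i ++ s := by
      intro i hi
      simp only [hPdef, dif_pos hi]
      exact (hsuf i hi).choose_spec
    have hcancel : ∀ (x y : List (Sig × ℕ)), x ++ s = y ++ s → x = y :=
      fun x y h => List.append_cancel_right h
    have hnonnil : ∀ i ≤ L, (cfg i).2 ≠ [] := by
      intro i hi h
      rw [hP i hi] at h
      exact hs (List.append_eq_nil_iff.mp h).2
    have hrun' := HOCA.transform A L cfg lab s d hrun hneq hnonnil P hP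
    have hP0 : P 0 = [(σ, m₁)] := hcancel _ _ ((hP 0 (Nat.zero_le L)).symm.trans h0')
    have hPL : P L = [] := by
      apply hcancel
      rw [← hP L le_rfl, hL]; rfl
    refine ⟨s, L, _, lab, hs, hrun', ?_, ?_, ?_, ?_⟩
    · have : (cfg 0).1 = q := by rw [h0]
      simp [this, hP0, HOCA.bump, hmd]
    · have : (cfg L).1 = q' := by rw [hL]
      simp [this, hPL]
    · intro i hi h
      simp only at h
      have hPi : P i = [] := by
        have := congrArg List.length h
        simp at this
        exact this
      exact hneq i hi (by rw [hP i (le_of_lt hi), hPi]; simp)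
    · intro i hi
      have hlen : ∀ j, j ≤ L →
          ((P j).map (HOCA.bump d) ++ s).length = (cfg j).2.length := by
        intro j hj; rw [hP j hj]; simp
      simp only
      rw [hlen i hi, hlen 0 (Nat.zero_le L)]
      exact hb i hi
  · rintro ⟨q, q'⟩ ⟨s, L, cfg, lab, hrun, h0, hL, hneq, hb⟩
    have hneq' : ∀ i < L, (cfg i).2 ≠ s := fun i hi => hneq i (le_of_lt hi)
    have h0' : (cfg 0).2 = [(σ, m₁)] ++ s := by rw [h0]; rfl
    have hsuf := HOCA.suffix_inv A L cfg lab s [(σ, m₁)] hrun h0' hneq'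
    set P : ℕ → List (Sig × ℕ) :=
      fun i => if h : i ≤ L then (hsuf i h).choose else [] with hPdef
    have hP : ∀ i ≤ L, (cfg i).2 = P i ++ s := by
      intro i hi
      simp only [hPdef, dif_pos hi]
      exact (hsuf i hi).choose_spec
    have hcancel : ∀ (x y : List (Sig × ℕ)), x ++ s = y ++ s → x = y :=
      fun x y h => List.append_cancel_right h
    have hnonnil : ∀ i ≤ L, (cfg i).2 ≠ [] := by
      intro i hi h
      have hsnil : s = [] := by
        have h' := h
        rw [hP i hi] at h'
        exact (List.append_eq_nil_iff.mp h').2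
      exact hneq i hi (h.trans hsnil.symm)
    have hrun' := HOCA.transform A L cfg lab s d hrun hneq' hnonnil P hP
    have hP0 : P 0 = [(σ, m₁)] := hcancel _ _ ((hP 0 (Nat.zero_le L)).symm.trans h0')
    have hPL : P L = [(σ, m₁)] := by
      apply hcancel
      rw [← hP L le_rfl, hL]; rfl
    refine ⟨s, L, _, lab, hrun', ?_, ?_, ?_, ?_⟩
    · have : (cfg 0).1 = q := by rw [h0]
      simp [this, hP0, HOCA.bump, hmd]
    · have : (cfg L).1 = q' := by rw [hL]
      simp [this, hPL, HOCA.bump, hmd]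
    · intro i hi h
      simp only at h
      have hPi : P i = [] := by
        have := congrArg List.length h
        simp at this
        exact this
      exact hneq i hi (by rw [hP i hi, hPi]; simp)
    · intro i hi
      have hlen : ∀ j, j ≤ L →
          ((P j).map (HOCA.bump d) ++ s).length = (cfg j).2.length := by
        intro j hj; rw [hP j hj]; simp
      simp only
      rw [hlen i hi, hlen 0 (Nat.zero_le L)]
      exact hb i hi
end

section
/- For a 2-HOCA without zero-test, the return sets stabilize in the counter value: for every k ∈ ℕ ∪ {∞}, every σ ∈ Σ, and every m ≥ |Σ|·|Q|², Ret_k((σ,m)) = Ret_k((σ, |Σ|·|Q|²)). -/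
/-!
Returns are described inductively by their first step (`HOCA.Ret`): a pop; an id, inc or dec
followed by a return; or a push of `τ`, followed by a return of `τ` at a lower level and then a
return. If at counter value `v + 1` no triple `(σ, q, q')` is new compared with value `v` at any
level `≤ j`, then none is new at any larger value at level `j`: shift a derivation one value
down, and where a `dec` reaches `v + 1` fall back on the hypothesis. Hence a triple new at
value `v` forces new triples at every smaller value, at levels that do not increase; by
monotonicity in the value and in the level these `v + 1` triples are distinct, so
`v < |Σ|·|Q|²`.
-/

theorem ENat.ne_zero_of_add_eq_add_one {j k : ℕ∞} {a : ℕ} (h : j + a = k + 1)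
    (ha : (a : ℕ∞) ≤ k) : j ≠ 0 := by
  rintro rfl
  rw [zero_add] at h
  have hk : k ≠ ⊤ := fun hk => by simp [hk] at h
  exact (lt_irrefl k) ((ENat.add_one_le_iff hk).1 (h ▸ ha))

namespace HOCA

open Relation

variable {Q Sig : Type} {A : Aut Q Sig}

def Step (A : Aut Q Sig) (x y : Config Q Sig) : Prop :=
  ∃ (σ : Sig) (op : HOp Sig) (n : ℕ) (rest : List (Sig × ℕ)),
    x.2 = (σ, n) :: rest ∧ A.Δ x.1 σ op y.1 ∧ applyOp op x.2 = some y.2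

theorem exists_isRun_iff [Nonempty Sig] {P H : Config Q Sig → Prop} {a b : Config Q Sig} :
    (∃ L cfg lab, IsRun A L cfg lab ∧ cfg 0 = a ∧ cfg L = b ∧
      (∀ i < L, P (cfg i)) ∧ ∀ i ≤ L, H (cfg i)) ↔
    H a ∧ ReflTransGen (fun x y => Step A x y ∧ P x ∧ H y) a b := by
  constructor
  · rintro ⟨L, cfg, lab, hrun, rfl, rfl, hP, hH⟩
    refine ⟨hH 0 L.zero_le, ?_⟩
    suffices ∀ i ≤ L, ReflTransGen (fun x y => Step A x y ∧ P x ∧ H y) (cfg 0) (cfg i) from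
      this L le_rfl
    intro i hi
    induction i with
    | zero => exact .refl
    | succ i ih =>
      obtain ⟨n, rest, htop, hΔ, hop⟩ := hrun i hi
      exact (ih (by omega)).tail ⟨⟨_, _, n, rest, htop, hΔ, hop⟩, hP i hi, hH (i + 1) hi⟩
  · rintro ⟨ha, hab⟩
    induction hab with
    | refl =>
      exact ⟨0, fun _ => a, fun _ => (Classical.arbitrary Sig, .id), fun _ h => absurd h (by omega),
        rfl, rfl, fun _ h => absurd h (by omega), fun _ _ => ha⟩
    | @tail c d _ hcd ih =>
      obtain ⟨⟨σ, op, n, rest, htop, hΔ, hop⟩, hPc, hHd⟩ := hcd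
      obtain ⟨L, cfg, lab, hrun, h0, hL, hP, hH⟩ := ih
      have hcfg : ∀ i ≤ L, Function.update cfg (L + 1) d i = cfg i :=
        fun i hi => Function.update_of_ne (by omega) _ _
      refine ⟨L + 1, Function.update cfg (L + 1) d, Function.update lab L (σ, op), ?_,
        by rw [hcfg 0 L.zero_le, h0], Function.update_self .., ?_, ?_⟩
      · intro i hi
        rcases Nat.lt_succ_iff_lt_or_eq.1 hi with hi | rfl
        · rw [hcfg i hi.le, hcfg (i + 1) hi, Function.update_of_ne hi.ne]
          exact hrun i hi
        · rw [hcfg i le_rfl, Function.update_self, Function.update_self, hL]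
          exact ⟨n, rest, htop, hΔ, hop⟩
      · intro i hi
        rw [hcfg i (by omega)]
        rcases Nat.lt_succ_iff_lt_or_eq.1 hi with hi | rfl
        · exact hP i hi
        · rwa [hL]
      · intro i hi
        rcases Nat.le_succ_iff.1 hi with hi | rfl
        · rw [hcfg i hi]
          exact hH i hi
        · rwa [Function.update_self]

def RetStep (A : Aut Q Sig) (s : List (Sig × ℕ)) (k : ℕ∞) (x y : Config Q Sig) : Prop :=
  Step A x y ∧ x.2 ≠ s ∧ (y.2.length : ℕ∞) ≤ (s.length + 1 : ℕ) + k

theorem mem_retSet_iff_reflTransGen [Nonempty Sig] {k : ℕ∞} {σ : Sig} {m : ℕ} {p : Q × Q} :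
    p ∈ RetSet A k σ m ↔ ∃ s ≠ [], ReflTransGen (RetStep A s k) (p.1, (σ, m) :: s) (p.2, s) := by
  constructor
  · rintro ⟨s, L, cfg, lab, hs, hrun, h0, hL, hne, hh⟩
    refine ⟨s, hs, (exists_isRun_iff.1 ⟨L, cfg, lab, hrun, h0, hL, hne, fun i hi => ?_⟩).2⟩
    have h := hh i hi
    rw [h0] at h
    exact h
  · rintro ⟨s, hs, hpath⟩
    obtain ⟨L, cfg, lab, hrun, h0, hL, hne, hh⟩ :=
      (exists_isRun_iff (P := fun x => x.2 ≠ s)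
        (H := fun y => (y.2.length : ℕ∞) ≤ (s.length + 1 : ℕ) + k)).2 ⟨le_self_add, hpath⟩
    exact ⟨s, L, cfg, lab, hs, hrun, h0, hL, hne, fun i hi => by rw [h0]; exact hh i hi⟩

/-- `(q, q') ∈ Ret_k((σ, c))` (see `mem_retSet_iff`). Levels live in `ℕ∞`, so `k = ∞` needs no
separate treatment. -/
inductive Ret (A : Aut Q Sig) : ℕ∞ → Sig → ℕ → Q → Q → Prop
  | pop {k σ c q q'} : A.Δ q σ .pop q' → Ret A k σ c q q'
  | id {k σ c q q₁ q'} : A.Δ q σ .id q₁ → Ret A k σ c q₁ q' → Ret A k σ c q q'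
  | inc {k σ c q q₁ q'} : A.Δ q σ .inc q₁ → Ret A k σ (c + 1) q₁ q' → Ret A k σ c q q'
  | dec {k σ c q q₁ q'} : A.Δ q σ .dec q₁ → Ret A k σ c q₁ q' → Ret A k σ (c + 1) q q'
  | push {k k' σ τ c q q₁ q₂ q'} : k' + 1 ≤ k → A.Δ q σ (.push τ) q₁ →
      Ret A k' τ c q₁ q₂ → Ret A k σ c q₂ q' → Ret A k σ c q q'

theorem Ret.mono_level {k k' : ℕ∞} {σ : Sig} {c : ℕ} {q q' : Q}
    (h : Ret A k σ c q q') (hk : k ≤ k') : Ret A k' σ c q q' := by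
  induction h with
  | pop hΔ => exact .pop hΔ
  | id hΔ _ ih => exact .id hΔ (ih hk)
  | inc hΔ _ ih => exact .inc hΔ (ih hk)
  | dec hΔ _ ih => exact .dec hΔ (ih hk)
  | push hk' hΔ hin _ _ ih => exact .push (hk'.trans hk) hΔ hin (ih hk)

theorem Ret.counter_succ {k : ℕ∞} {σ : Sig} {c : ℕ} {q q' : Q}
    (h : Ret A k σ c q q') : Ret A k σ (c + 1) q q' := by
  induction h with
  | pop hΔ => exact .pop hΔ
  | id hΔ _ ih => exact .id hΔ ih
  | inc hΔ _ ih => exact .inc hΔ ih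
  | dec hΔ _ ih => exact .dec hΔ ih
  | push hk hΔ _ _ ih₁ ih₂ => exact .push hk hΔ ih₁ ih₂

theorem Ret.mono_counter {k : ℕ∞} {σ : Sig} {c c' : ℕ} {q q' : Q}
    (h : Ret A k σ c q q') (hc : c ≤ c') : Ret A k σ c' q q' := by
  induction c', hc using Nat.le_induction with
  | base => exact h
  | succ _ _ ih => exact ih.counter_succ

theorem Ret.reflTransGen {k : ℕ∞} {σ : Sig} {c : ℕ} {q q' : Q} (h : Ret A k σ c q q')
    {s : List (Sig × ℕ)} (hs : s ≠ []) :
    ReflTransGen (fun x y => RetStep A s k x y ∧ s.length < x.2.length)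
      (q, (σ, c) :: s) (q', s) := by
  -- the length invariant lets the inner return of a push, over `(σ, c) :: s`, count as part of
  -- a return over `s`
  induction h generalizing s with
  | pop hΔ =>
    obtain ⟨b, s, rfl⟩ := List.exists_cons_of_ne_nil hs
    exact .single ⟨⟨⟨_, _, _, _, rfl, hΔ, rfl⟩, by simp,
      (Nat.cast_le.2 (Nat.le_succ _)).trans le_self_add⟩, by simp⟩
  | id hΔ _ ih | inc hΔ _ ih | dec hΔ _ ih =>
    refine .head ?_ (ih hs)
    exact ⟨⟨⟨_, _, _, _, rfl, hΔ, rfl⟩, by simp, le_self_add⟩, by simp⟩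
  | @push k k' σ τ c q q₁ q₂ q' hk hΔ _ _ ih₁ ih₂ =>
    have hlift : ∀ x y, RetStep A ((σ, c) :: s) k' x y ∧ ((σ, c) :: s).length < x.2.length →
        RetStep A s k x y ∧ s.length < x.2.length := by
      rintro x y ⟨⟨hxy, -, hy⟩, hx⟩
      simp only [List.length_cons] at hx
      refine ⟨⟨hxy, fun hxs => by simp [hxs] at hx, hy.trans ?_⟩, by omega⟩
      calc (((σ, c) :: s).length + 1 : ℕ) + k' = (s.length + 1 : ℕ) + (k' + 1) := by
            simp only [List.length_cons]; push_cast; ring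
        _ ≤ _ := by gcongr
    have hin := ReflTransGen.mono hlift _ _ (ih₁ (s := (σ, c) :: s) (by simp))
    refine .head ⟨⟨⟨_, _, _, _, rfl, hΔ, rfl⟩, by simp, ?_⟩, by simp⟩ (hin.trans (ih₂ hs))
    calc (((τ, c) :: (σ, c) :: s).length : ℕ∞) = (s.length + 1 : ℕ) + 1 := by simp
      _ ≤ (s.length + 1 : ℕ) + (k' + 1) := by gcongr; exact le_add_self
      _ ≤ _ := by gcongr

/-- The entries of `w` (top first) are returned from one after the other, from `q` to `q'`; the
top one at level `k`, each entry below it at one level more. -/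
inductive RetStack (A : Aut Q Sig) : ℕ∞ → List (Sig × ℕ) → Q → Q → Prop
  | nil {k q} : RetStack A k [] q q
  | cons {k σ c w q p q'} :
      Ret A k σ c q p → RetStack A (k + 1) w p q' → RetStack A k ((σ, c) :: w) q q'

/-- The level `j` of the top of the stack `w` above `s` is what the height bound `|s| + 1 + k`
leaves to it. -/
theorem RetStack.of_retStep {k : ℕ∞} {s : List (Sig × ℕ)} {q' : Q} {x y : Config Q Sig}
    (hxy : RetStep A s k x y)
    (hy : ∀ w j, y.2 = w ++ s → j + w.length = k + 1 → RetStack A j w y.1 q')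
    {w : List (Sig × ℕ)} {j : ℕ∞} (hw : x.2 = w ++ s) (hj : j + w.length = k + 1) :
    RetStack A j w x.1 q' := by
  obtain ⟨p, st⟩ := y
  obtain ⟨⟨σ', op, n, rest, hx, hΔ, hop⟩, hxs, hst⟩ := hxy
  rcases w with _ | ⟨⟨σ, c⟩, w⟩
  · exact absurd (by simpa using hw) hxs
  rw [hw, List.cons_append, List.cons.injEq, Prod.mk.injEq] at hx
  obtain ⟨⟨rfl, rfl⟩, rfl⟩ := hx
  rw [hw, List.cons_append] at hop
  simp only [List.length_cons, Nat.cast_add, Nat.cast_one] at hj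
  cases op with
  | pop =>
    obtain rfl : st = w ++ s := by
      cases hws : w ++ s <;> simp_all [applyOp]
    exact .cons (.pop hΔ) (hy w (j + 1) rfl (by rw [← hj]; ring))
  | push τ =>
    simp only [applyOp, Option.some.injEq] at hop
    subst hop
    have hwk : ((w.length + 1 : ℕ) : ℕ∞) ≤ k := by
      rw [← ENat.add_le_add_iff_left (k := ((s.length + 1 : ℕ) : ℕ∞)) (by simp)]
      refine Eq.trans_le ?_ hst
      simp only [List.length_cons, List.length_append]
      push_cast
      ring
    obtain ⟨j, rfl⟩ : ∃ j', j = j' + 1 :=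
      ⟨j - 1, (tsub_add_cancel_of_le (Order.one_le_iff_ne_zero.2
        (ENat.ne_zero_of_add_eq_add_one (by push_cast; exact hj) hwk))).symm⟩
    have hj' : j + (((τ, c) :: (σ, c) :: w).length : ℕ) = k + 1 := by
      simp only [List.length_cons]
      push_cast
      rw [← hj]
      ring
    cases hy _ j rfl hj' with
    | cons hin hrest =>
      cases hrest with
      | cons hout hw' => exact .cons (.push le_rfl hΔ hin hout) hw'
  | inc =>
    simp only [applyOp, Option.some.injEq] at hop
    subst hop
    cases hy ((σ, c + 1) :: w) j rfl (by simpa using hj) with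
    | cons hr hw' => exact .cons (.inc hΔ hr) hw'
  | dec =>
    rcases c with _ | c
    · simp [applyOp] at hop
    simp only [applyOp, Option.some.injEq] at hop
    subst hop
    cases hy ((σ, c) :: w) j rfl (by simpa using hj) with
    | cons hr hw' => exact .cons (.dec hΔ hr) hw'
  | id =>
    simp only [applyOp, Option.some.injEq] at hop
    subst hop
    cases hy ((σ, c) :: w) j rfl (by simpa using hj) with
    | cons hr hw' => exact .cons (.id hΔ hr) hw'

theorem RetStack.of_reflTransGen {k : ℕ∞} {s : List (Sig × ℕ)} {q' : Q} {x : Config Q Sig}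
    (h : ReflTransGen (RetStep A s k) x (q', s)) (w : List (Sig × ℕ)) (j : ℕ∞)
    (hw : x.2 = w ++ s) (hj : j + w.length = k + 1) : RetStack A j w x.1 q' := by
  induction h using ReflTransGen.head_induction_on generalizing w j with
  | refl =>
    obtain rfl : w = [] := by simpa using hw
    exact .nil
  | head hxy _ ih => exact RetStack.of_retStep hxy ih hw hj

theorem mem_retSet_iff [Nonempty Sig] {k : ℕ∞} {σ : Sig} {m : ℕ} {p : Q × Q} :
    p ∈ RetSet A k σ m ↔ Ret A k σ m p.1 p.2 := by
  rw [mem_retSet_iff_reflTransGen]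
  constructor
  · rintro ⟨s, -, hpath⟩
    cases RetStack.of_reflTransGen hpath [(σ, m)] k rfl (by simp) with
    | cons hret hnil => cases hnil; exact hret
  · exact fun h => ⟨[(σ, 0)], by simp,
      ReflTransGen.mono (fun _ _ h => h.1) _ _ (h.reflTransGen (List.cons_ne_nil _ _))⟩

theorem Ret.counter_pred {j : ℕ∞} {v : ℕ}
    (hv : ∀ j' ≤ j, ∀ τ p p', Ret A j' τ (v + 1) p p' → Ret A j' τ v p p')
    {k : ℕ∞} {σ : Sig} {c : ℕ} {q q' : Q} (h : Ret A k σ (c + 1) q q') (hk : k ≤ j)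
    (hc : v + 1 ≤ c) : Ret A k σ c q q' := by
  -- only the part of the derivation above the value `v + 1` is shifted
  generalize hd : c + 1 = d at h
  induction h generalizing c with
  | pop hΔ => exact .pop hΔ
  | id hΔ _ ih => exact .id hΔ (ih hk hc hd)
  | inc hΔ _ ih => exact .inc hΔ (ih hk (by omega) (by omega))
  | @dec k σ e q q₁ q' hΔ hsub ih =>
    obtain rfl : e = c := by omega
    rcases hc.eq_or_lt with rfl | hlt
    · exact .dec hΔ (hv k hk _ _ _ hsub)
    · obtain ⟨c, rfl⟩ : ∃ c', e = c' + 1 := ⟨e - 1, by omega⟩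
      exact .dec hΔ (ih hk (by omega) rfl)
  | push hk' hΔ _ _ ih₁ ih₂ =>
    exact .push hk' hΔ (ih₁ (le_self_add.trans (hk'.trans hk)) hc hd) (ih₂ hk hc hd)

def retTriples (A : Aut Q Sig) (k : ℕ∞) (c : ℕ) : Set (Sig × Q × Q) :=
  {t | Ret A k t.1 c t.2.1 t.2.2}

theorem retTriples_mono {k k' : ℕ∞} {c c' : ℕ} (hk : k ≤ k') (hc : c ≤ c') :
    retTriples A k c ⊆ retTriples A k' c' :=
  fun _ h => (Ret.mono_level h hk).mono_counter hc

theorem exists_retTriples_ssubset_of_succ {j : ℕ∞} {v : ℕ}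
    (h : retTriples A j (v + 1) ⊂ retTriples A j (v + 1 + 1)) :
    ∃ j' ≤ j, retTriples A j' v ⊂ retTriples A j' (v + 1) := by
  by_contra! hnone
  refine h.not_subset fun t ht => Ret.counter_pred (fun j' hj' τ p p' hp => ?_) ht le_rfl le_rfl
  have heq := LE.le.eq_of_not_ssubset (retTriples_mono le_rfl v.le_succ) (hnone j' hj')
  change (τ, p, p') ∈ retTriples A j' v
  rw [heq]
  exact hp

theorem succ_le_ncard_retTriples [Finite Q] [Finite Sig] {j : ℕ∞} {v : ℕ}
    (h : retTriples A j v ⊂ retTriples A j (v + 1)) :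
    v + 1 ≤ (retTriples A j (v + 1)).ncard := by
  induction v generalizing j with
  | zero => exact (Set.ncard_lt_ncard h (Set.toFinite _)).trans_le' (Nat.zero_le _)
  | succ v ih =>
    obtain ⟨j', hj', h'⟩ := exists_retTriples_ssubset_of_succ h
    calc v + 1 + 1 ≤ (retTriples A j' (v + 1)).ncard + 1 := by gcongr; exact ih h'
      _ ≤ (retTriples A j (v + 1)).ncard + 1 :=
          Nat.add_le_add_right (Set.ncard_le_ncard (retTriples_mono hj' le_rfl)) 1
      _ ≤ _ := Set.ncard_lt_ncard h (Set.toFinite _)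

theorem retTriples_succ_eq [Finite Q] [Finite Sig] {j : ℕ∞} {v : ℕ}
    (hv : Nat.card Sig * Nat.card Q ^ 2 ≤ v) : retTriples A j (v + 1) = retTriples A j v := by
  by_contra hne
  have hcount := succ_le_ncard_retTriples
    (LE.le.ssubset_of_ne (retTriples_mono le_rfl v.le_succ) (Ne.symm hne))
  have hcard : Nat.card (Sig × Q × Q) = Nat.card Sig * Nat.card Q ^ 2 := by
    rw [Nat.card_prod, Nat.card_prod, sq]
  have := Set.ncard_le_card (retTriples A j (v + 1))
  omega

theorem retTriples_eq_of_le [Finite Q] [Finite Sig] (j : ℕ∞) {m : ℕ}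
    (hm : Nat.card Sig * Nat.card Q ^ 2 ≤ m) :
    retTriples A j m = retTriples A j (Nat.card Sig * Nat.card Q ^ 2) := by
  induction m, hm using Nat.le_induction with
  | base => rfl
  | succ m hm ih => rw [retTriples_succ_eq hm, ih]

end HOCA

/-- For a 2-HOCA without zero-test, returns stabilize in the
counter value: for every `k ∈ ℕ ∪ {∞}`, every `σ ∈ Σ` and every
`m ≥ |Σ|·|Q|²`, `Ret_k((σ,m)) = Ret_k((σ,|Σ|·|Q|²))`. -/
theorem hoca_ret_counter_stabilizes {Q Sig : Type} [Fintype Q] [Fintype Sig]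
    (A : HOCA.Aut Q Sig) :
    ∀ (k : ℕ∞) (σ : Sig) (m : ℕ),
      Fintype.card Sig * Fintype.card Q ^ 2 ≤ m →
      HOCA.RetSet A k σ m =
        HOCA.RetSet A k σ (Fintype.card Sig * Fintype.card Q ^ 2) := by
  intro k σ m hm
  have : Nonempty Sig := ⟨σ⟩
  simp only [← Nat.card_eq_fintype_card] at hm ⊢
  ext ⟨q, q'⟩
  rw [HOCA.mem_retSet_iff, HOCA.mem_retSet_iff]
  exact Set.ext_iff.1 (HOCA.retTriples_eq_of_le k hm) (σ, q, q')
end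

section
/- For every 2-HOCA without zero-test there exists a deterministic finite word automaton over the unary alphabet {⊥} with at most 2·(|Σ|·|Q|² + 1) states that, after reading ⊥ⁿ, is in the state (Ret_∞((σ,n)), Loop_∞((σ,n)))_{σ∈Σ} for every n ∈ ℕ. -/
namespace HOCA

variable {Q Sig : Type} {A : Aut Q Sig}

theorem heightTop (L : ℕ) (cfg : ℕ → Config Q Sig) : heightBounded ⊤ L cfg := by
  intro i _
  rw [add_top]
  exact le_top

theorem subRun {L : ℕ} {cfg : ℕ → Config Q Sig} {lab : ℕ → Sig × HOp Sig}
    (h : IsRun A L cfg lab) (a b : ℕ) (hab : a + b ≤ L) :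
    IsRun A b (fun i => cfg (a + i)) (fun i => lab (a + i)) := by
  intro i hi
  have := h (a + i) (by omega)
  simpa [Nat.add_assoc] using this

theorem concatRun {L₁ L₂ : ℕ} {cfg₁ cfg₂ : ℕ → Config Q Sig}
    {lab₁ lab₂ : ℕ → Sig × HOp Sig}
    (h₁ : IsRun A L₁ cfg₁ lab₁) (h₂ : IsRun A L₂ cfg₂ lab₂)
    (hglue : cfg₁ L₁ = cfg₂ 0) :
    ∃ cfg lab, IsRun A (L₁ + L₂) cfg lab ∧
      (∀ i ≤ L₁, cfg i = cfg₁ i) ∧ (∀ i, L₁ ≤ i → cfg i = cfg₂ (i - L₁)) := by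
  refine ⟨fun i => if i ≤ L₁ then cfg₁ i else cfg₂ (i - L₁),
    fun i => if i < L₁ then lab₁ i else lab₂ (i - L₁), ?_, ?_, ?_⟩
  · intro i hi
    by_cases hc : i < L₁
    · have := h₁ i hc
      simp only [if_pos hc, if_pos (le_of_lt hc), if_pos (Nat.succ_le_of_lt hc)]
      exact this
    · have hL₁ : L₁ ≤ i := le_of_not_gt hc
      have := h₂ (i - L₁) (by omega)
      have e1 : (if i ≤ L₁ then cfg₁ i else cfg₂ (i - L₁)) = cfg₂ (i - L₁) := by
        by_cases h : i ≤ L₁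
        · have : i = L₁ := le_antisymm h hL₁
          simp [h, this, hglue]
        · simp [h]
      have e2 : (if i + 1 ≤ L₁ then cfg₁ (i + 1) else cfg₂ (i + 1 - L₁)) = cfg₂ (i - L₁ + 1) := by
        have : ¬ (i + 1 ≤ L₁) := by omega
        simp [this]
        congr 1
        omega
      simp only [if_neg hc, e1, e2]
      exact this
  · intro i hi; simp [hi]
  · intro i hi
    by_cases h : i ≤ L₁
    · have : i = L₁ := le_antisymm h hi
      simp [this, hglue]
    · simp [h]

theorem mkStep {q q' : Q} {σ : Sig} {op : HOp Sig} {st st' : List (Sig × ℕ)} {c : ℕ}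
    (hst : st = (σ, c) :: st.tail)
    (hΔ : A.Δ q σ op q') (happ : applyOp op st = some st') :
    IsRun A 1 (fun i => if i = 0 then (q, st) else (q', st'))
      (fun _ => (σ, op)) := by
  intro i hi
  interval_cases i
  exact ⟨c, st.tail, by simpa using hst, by simpa using hΔ, by simpa using happ⟩

/-- Steps from a stack with a nonempty part above suffix `s` keep the suffix `s`. -/
theorem stepSuffix {op : HOp Sig} {x s st' : List (Sig × ℕ)} (hx : x ≠ [])
    (happ : applyOp op (x ++ s) = some st') : ∃ x', st' = x' ++ s := by
  obtain ⟨⟨a, ca⟩, x, rfl⟩ := List.exists_cons_of_ne_nil hx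
  cases op with
  | pop =>
    cases x with
    | nil =>
      cases s with
      | nil => simp [applyOp] at happ
      | cons b t => refine ⟨[], ?_⟩; simpa [applyOp] using happ.symm
    | cons b t => refine ⟨b :: t, ?_⟩; simpa [applyOp] using happ.symm
  | push τ => exact ⟨(τ, ca) :: (a, ca) :: x, by simpa [applyOp] using happ.symm⟩
  | inc => exact ⟨(a, ca + 1) :: x, by simpa [applyOp] using happ.symm⟩
  | dec =>
    cases ca with
    | zero => simp [applyOp] at happ
    | succ m => exact ⟨(a, m) :: x, by simpa [applyOp] using happ.symm⟩
  | id => exact ⟨(a, ca) :: x, by simpa [applyOp] using happ.symm⟩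

/-- Steps from a stack `(σ,c)::s`. -/
theorem stepBase {op : HOp Sig} {σ : Sig} {c : ℕ} {s st' : List (Sig × ℕ)}
    (happ : applyOp op ((σ, c) :: s) = some st') :
    (st' = s ∧ op = HOp.pop) ∨ (∃ e, st' = (σ, e) :: s ∧ (e = c + 1 ∨ e + 1 = c)) ∨
      (∃ τ, op = HOp.push τ ∧ st' = (τ, c) :: (σ, c) :: s) ∨ st' = (σ, c) :: s := by
  cases op with
  | pop =>
    cases s with
    | nil => simp [applyOp] at happ
    | cons b t => exact Or.inl ⟨by simpa [applyOp] using happ.symm, rfl⟩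
  | push τ =>
    right; right; left; exact ⟨τ, rfl, by simpa [applyOp] using happ.symm⟩
  | inc => right; left; exact ⟨c + 1, by simpa [applyOp] using happ.symm, Or.inl rfl⟩
  | dec =>
    cases c with
    | zero => simp [applyOp] at happ
    | succ m => right; left; exact ⟨m, by simpa [applyOp] using happ.symm, Or.inr rfl⟩
  | id => right; right; right; simpa [applyOp] using happ.symm

end HOCA
namespace HOCA

variable {Q Sig : Type} {A : Aut Q Sig}

/-- Suffix persistence: while the run avoids `s`, the strict suffix `s` persists. -/
theorem persistSuffix {L : ℕ} {cfg : ℕ → Config Q Sig} {lab : ℕ → Sig × HOp Sig}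
    (h : IsRun A L cfg lab) {a b : ℕ} (hbL : b ≤ L)
    {s x₀ : List (Sig × ℕ)} (h0 : (cfg a).2 = x₀ ++ s) (hx0 : x₀ ≠ [])
    (havoid : ∀ k, a < k → k ≤ b → (cfg k).2 ≠ s) :
    ∀ k, a ≤ k → k ≤ b → ∃ x, x ≠ [] ∧ (cfg k).2 = x ++ s := by
  intro k hak hkb
  induction k, hak using Nat.le_induction with
  | base => exact ⟨x₀, hx0, h0⟩
  | succ k hak ih =>
    obtain ⟨x, hx, hst⟩ := ih (by omega)
    obtain ⟨n, rest, -, -, happ⟩ := h k (by omega)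
    rw [hst] at happ
    obtain ⟨x', hx'⟩ := stepSuffix hx happ
    refine ⟨x', ?_, hx'⟩
    intro hnil
    exact havoid (k + 1) (by omega) hkb (by simp [hx', hnil])

/-- Base-counter persistence with a barrier value `bound`. -/
theorem basePersist {L : ℕ} {cfg : ℕ → Config Q Sig} {lab : ℕ → Sig × HOp Sig}
    (h : IsRun A L cfg lab) (C : ℕ → Prop) (bound : ℕ)
    (hC : ∀ c e, C c → (e = c + 1 ∨ e + 1 = c) → C e ∨ e = bound)
    {a b : ℕ} (hbL : b ≤ L) {σ : Sig} {s : List (Sig × ℕ)} {c₀ : ℕ}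
    (h0 : (cfg a).2 = (σ, c₀) :: s) (hc0 : C c₀)
    (havoid : ∀ k, a < k → k ≤ b →
      (cfg k).2 ≠ s ∧ ((cfg k).2 = (σ, bound) :: s → C bound)) :
    ∀ k, a ≤ k → k ≤ b → ∃ x c', C c' ∧ (cfg k).2 = x ++ (σ, c') :: s := by
  intro k hak hkb
  induction k, hak using Nat.le_induction with
  | base => exact ⟨[], c₀, hc0, h0⟩
  | succ k hak ih =>
    obtain ⟨x, c', hc', hst⟩ := ih (by omega)
    obtain ⟨n, rest, -, -, happ⟩ := h k (by omega)
    rw [hst] at happ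
    rcases eq_or_ne x [] with rfl | hx
    · simp only [List.nil_append] at happ
      rcases stepBase happ with ⟨hs, -⟩ | ⟨e, he, hadj⟩ | ⟨τ, -, hpu⟩ | hsame
      · exact absurd hs (havoid (k + 1) (by omega) hkb).1
      · rcases hC c' e hc' hadj with hCe | rfl
        · exact ⟨[], e, hCe, he⟩
        · exact ⟨[], e, (havoid (k + 1) (by omega) hkb).2 he, he⟩
      · exact ⟨[(τ, c')], c', hc', hpu⟩
      · exact ⟨[], c', hc', hsame⟩
    · obtain ⟨x', hx'⟩ := stepSuffix (s := (σ, c') :: s) hx happ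
      exact ⟨x', c', hc', hx'⟩

end HOCA
namespace HOCA

variable {Q Sig : Type} {A : Aut Q Sig}

/-- Add `d` to every counter in a stack fragment. -/
def updC {Sig : Type} (d : ℕ) : List (Sig × ℕ) → List (Sig × ℕ) :=
  List.map (fun p => (p.1, p.2 + d))

theorem updC_zero (x : List (Sig × ℕ)) : updC 0 x = x := by
  simp [updC]

theorem updC_append_ne {d : ℕ} {x s₂ : List (Sig × ℕ)} (hx : x ≠ []) :
    updC d x ++ s₂ ≠ s₂ := by
  intro h
  have := congrArg List.length h
  simp [updC] at this
  exact hx this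

theorem stepShift (d : ℕ) {op : HOp Sig} {a : Sig} {ca : ℕ}
    {xt x' s s₂ : List (Sig × ℕ)}
    (hs2 : x' = [] → s₂ ≠ [])
    (happ : applyOp op (((a, ca) :: xt) ++ s) = some (x' ++ s)) :
    applyOp op (updC d ((a, ca) :: xt) ++ s₂) = some (updC d x' ++ s₂) := by
  cases op with
  | pop =>
    cases xt with
    | nil =>
      cases s with
      | nil => simp [applyOp] at happ
      | cons b t =>
        simp only [List.cons_append, List.nil_append, applyOp, Option.some.injEq] at happ
        have hx' : x' = [] := by
          have := congrArg List.length happ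
          simp at this
          exact this
        subst hx'
        obtain ⟨b₂, t₂, rfl⟩ := List.exists_cons_of_ne_nil (hs2 rfl)
        simp [applyOp, updC]
    | cons b t =>
      simp only [List.cons_append, applyOp, Option.some.injEq] at happ
      have hx' : x' = b :: t := List.append_cancel_right (bs := s)
        (by simpa using happ.symm)
      subst hx'
      simp [applyOp, updC]
  | push τ =>
    simp only [List.cons_append, applyOp, Option.some.injEq] at happ
    have hx' : x' = (τ, ca) :: (a, ca) :: xt := List.append_cancel_right (bs := s)
      (by simpa using happ.symm)
    subst hx'
    simp [applyOp, updC]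
  | inc =>
    simp only [List.cons_append, applyOp, Option.some.injEq] at happ
    have hx' : x' = (a, ca + 1) :: xt := List.append_cancel_right (bs := s)
      (by simpa using happ.symm)
    subst hx'
    simp only [updC, List.map_cons, List.cons_append, applyOp, Option.some.injEq,
      List.cons.injEq, Prod.mk.injEq]
    refine ⟨⟨trivial, by omega⟩, trivial⟩
  | dec =>
    cases ca with
    | zero => simp [applyOp] at happ
    | succ m =>
      simp only [List.cons_append, applyOp, Option.some.injEq] at happ
      have hx' : x' = (a, m) :: xt := List.append_cancel_right (bs := s)
        (by simpa using happ.symm)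
      subst hx'
      have he : m + 1 + d = (m + d) + 1 := by omega
      simp only [updC, List.map_cons, List.cons_append, he, applyOp, Option.some.injEq]
  | id =>
    simp only [List.cons_append, applyOp, Option.some.injEq] at happ
    have hx' : x' = (a, ca) :: xt := List.append_cancel_right (bs := s)
      (by simpa using happ.symm)
    subst hx'
    simp [applyOp, updC]

/-- Transplant a run living strictly above suffix `s` onto a new suffix `s₂`,
adding `d` to all counters above the suffix. -/
theorem shiftRun (d : ℕ) {L : ℕ} {cfg : ℕ → Config Q Sig} {lab : ℕ → Sig × HOp Sig}
    {s s₂ : List (Sig × ℕ)}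
    (h : IsRun A L cfg lab)
    (hdec : ∀ i ≤ L, ∃ x, (cfg i).2 = x ++ s ∧ (i < L → x ≠ []) ∧ (x = [] → s₂ ≠ [])) :
    ∃ cfg₂, IsRun A L cfg₂ lab ∧
      ∀ i x, i ≤ L → (cfg i).2 = x ++ s → cfg₂ i = ((cfg i).1, updC d x ++ s₂) := by
  classical
  set G : List (Sig × ℕ) → List (Sig × ℕ) :=
    fun st => updC d (st.take (st.length - s.length)) ++ s₂ with hGdef
  have hG : ∀ x : List (Sig × ℕ), G (x ++ s) = updC d x ++ s₂ := by
    intro x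
    have h1 : (x ++ s).length - s.length = x.length := by simp
    simp only [hGdef, h1, List.take_left]
  refine ⟨fun i => ((cfg i).1, G (cfg i).2), ?_, ?_⟩
  · intro i hi
    obtain ⟨x, hst, hxne, _⟩ := hdec i (le_of_lt hi)
    obtain ⟨x', hst', _, hs2'⟩ := hdec (i + 1) hi
    obtain ⟨n, rest, htop, hΔ, happ⟩ := h i hi
    obtain ⟨⟨a, ca⟩, xt, rfl⟩ := List.exists_cons_of_ne_nil (hxne hi)
    have hst2 : (cfg i).2 = ((a, ca) :: xt) ++ s := by simpa using hst
    have htop' : (lab i).1 = a := by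
      rw [hst2] at htop
      simp only [List.cons_append, List.cons.injEq, Prod.mk.injEq] at htop
      exact htop.1.1.symm
    rw [hst2, hst'] at happ
    refine ⟨ca + d, updC d xt ++ s₂, ?_, hΔ, ?_⟩
    · show G (cfg i).2 = _
      rw [hst2, hG, htop']
      simp [updC]
    · show applyOp (lab i).2 (G (cfg i).2) = some (G (cfg (i + 1)).2)
      rw [hst2, hst', hG, hG]
      exact stepShift d hs2' happ
  · intro i x _ hst
    simp only [hst, hG]

end HOCA
namespace HOCA

variable {Q Sig : Type} {A : Aut Q Sig}

theorem retDec {σ : Sig} {m : ℕ} {p : Q × Q} (hp : p ∈ RetSet A ⊤ σ m) :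
    ∀ {s : List (Sig × ℕ)}, s ≠ [] →
      ∃ L cfg lab, IsRun A L cfg lab ∧ (∀ i ≤ L, ∃ x, (cfg i).2 = x ++ s ∧ (i < L → x ≠ [])) ∧
        cfg 0 = (p.1, (σ, m) :: s) ∧ cfg L = (p.2, s) := by
  intro s₂ hs₂
  obtain ⟨s, L, cfg, lab, hs, hrun, h0, hL, hav, -⟩ := hp
  have hdec : ∀ i ≤ L, ∃ x, (cfg i).2 = x ++ s ∧ (i < L → x ≠ []) ∧ (x = [] → s₂ ≠ []) := by
    intro i hi
    rcases eq_or_lt_of_le hi with rfl | hilt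
    · exact ⟨[], by simp [hL], by omega, fun _ => hs₂⟩
    · obtain ⟨x, hx, hst⟩ := persistSuffix hrun (a := 0) (b := i) (le_of_lt hilt)
        (x₀ := [(σ, m)]) (by simp [h0]) (by simp)
        (fun k _ hk => hav k (lt_of_le_of_lt hk hilt)) i (Nat.zero_le i) le_rfl
      exact ⟨x, hst, fun _ => hx, fun h => absurd h hx⟩
  obtain ⟨cfg₂, hrun₂, hval⟩ := shiftRun (A := A) 0 hrun hdec
  refine ⟨L, cfg₂, lab, hrun₂, ?_, ?_, ?_⟩
  · intro i hi
    obtain ⟨x, hst, hxne, -⟩ := hdec i hi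
    exact ⟨x, by rw [hval i x hi hst, updC_zero], hxne⟩
  · rw [hval 0 [(σ, m)] (Nat.zero_le L) (by simp [h0]), updC_zero, h0]
    rfl
  · rw [hval L [] le_rfl (by simp [hL]), updC_zero, hL]
    rfl

theorem loopDec {σ : Sig} {m : ℕ} {p : Q × Q} (hp : p ∈ LoopSet A ⊤ σ m) :
    ∀ {s : List (Sig × ℕ)}, s ≠ [] →
      ∃ L cfg lab, IsRun A L cfg lab ∧ (∀ i ≤ L, ∃ x, x ≠ [] ∧ (cfg i).2 = x ++ s) ∧
        cfg 0 = (p.1, (σ, m) :: s) ∧ cfg L = (p.2, (σ, m) :: s) := by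
  intro s₂ hs₂
  obtain ⟨s, L, cfg, lab, hrun, h0, hL, hav, -⟩ := hp
  have hdec : ∀ i ≤ L, ∃ x, (cfg i).2 = x ++ s ∧ (i < L → x ≠ []) ∧ (x = [] → s₂ ≠ []) := by
    intro i hi
    obtain ⟨x, hx, hst⟩ := persistSuffix hrun (a := 0) (b := i) hi
      (x₀ := [(σ, m)]) (by simp [h0]) (by simp)
      (fun k _ hk => hav k (le_trans hk hi)) i (Nat.zero_le i) le_rfl
    exact ⟨x, hst, fun _ => hx, fun h => absurd h hx⟩
  obtain ⟨cfg₂, hrun₂, hval⟩ := shiftRun (A := A) 0 hrun hdec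
  refine ⟨L, cfg₂, lab, hrun₂, ?_, ?_, ?_⟩
  · intro i hi
    obtain ⟨x, hst, hxne, -⟩ := hdec i hi
    obtain ⟨x', hx', hst'⟩ := persistSuffix hrun (a := 0) (b := i) hi
      (x₀ := [(σ, m)]) (by simp [h0]) (by simp)
      (fun k _ hk => hav k (le_trans hk hi)) i (Nat.zero_le i) le_rfl
    exact ⟨x', hx', by rw [hval i x' hi hst', updC_zero]⟩
  · rw [hval 0 [(σ, m)] (Nat.zero_le L) (by simp [h0]), updC_zero, h0]
    rfl
  · rw [hval L [(σ, m)] le_rfl (by simp [hL]), updC_zero, hL]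
    rfl

theorem monoRet (σ : Sig) (m : ℕ) : RetSet A ⊤ σ m ⊆ RetSet A ⊤ σ (m + 1) := by
  intro p hp
  obtain ⟨s, L, cfg, lab, hs, hrun, h0, hL, hav, -⟩ := hp
  have hdec : ∀ i ≤ L, ∃ x, (cfg i).2 = x ++ s ∧ (i < L → x ≠ []) ∧ (x = [] → s ≠ []) := by
    intro i hi
    rcases eq_or_lt_of_le hi with rfl | hilt
    · exact ⟨[], by simp [hL], by omega, fun _ => hs⟩
    · obtain ⟨x, hx, hst⟩ := persistSuffix hrun (a := 0) (b := i) (le_of_lt hilt)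
        (x₀ := [(σ, m)]) (by simp [h0]) (by simp)
        (fun k _ hk => hav k (lt_of_le_of_lt hk hilt)) i (Nat.zero_le i) le_rfl
      exact ⟨x, hst, fun _ => hx, fun h => absurd h hx⟩
  obtain ⟨cfg₂, hrun₂, hval⟩ := shiftRun (A := A) 1 hrun hdec
  refine ⟨s, L, cfg₂, lab, hs, hrun₂, ?_, ?_, ?_, heightTop L cfg₂⟩
  · rw [hval 0 [(σ, m)] (Nat.zero_le L) (by simp [h0]), h0]
    rfl
  · rw [hval L [] le_rfl (by simp [hL]), hL]
    rfl
  · intro i hi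
    obtain ⟨x, hst, hxne, -⟩ := hdec i (le_of_lt hi)
    rw [hval i x (le_of_lt hi) hst]
    exact updC_append_ne (hxne hi)

theorem monoLoop (σ : Sig) (m : ℕ) : LoopSet A ⊤ σ m ⊆ LoopSet A ⊤ σ (m + 1) := by
  intro p hp
  obtain ⟨s, L, cfg, lab, hrun, h0, hL, hav, -⟩ := hp
  have hdec : ∀ i ≤ L, ∃ x, (cfg i).2 = x ++ s ∧ (i < L → x ≠ []) ∧ (x = [] → s ≠ []) := by
    intro i hi
    obtain ⟨x, hx, hst⟩ := persistSuffix hrun (a := 0) (b := i) hi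
      (x₀ := [(σ, m)]) (by simp [h0]) (by simp)
      (fun k _ hk => hav k (le_trans hk hi)) i (Nat.zero_le i) le_rfl
    exact ⟨x, hst, fun _ => hx, fun h => absurd h hx⟩
  obtain ⟨cfg₂, hrun₂, hval⟩ := shiftRun (A := A) 1 hrun hdec
  refine ⟨s, L, cfg₂, lab, hrun₂, ?_, ?_, ?_, heightTop L cfg₂⟩
  · rw [hval 0 [(σ, m)] (Nat.zero_le L) (by simp [h0]), h0]
    rfl
  · rw [hval L [(σ, m)] le_rfl (by simp [hL]), hL]
    rfl
  · intro i hi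
    obtain ⟨x, hx, hst⟩ := persistSuffix hrun (a := 0) (b := i) hi
      (x₀ := [(σ, m)]) (by simp [h0]) (by simp)
      (fun k _ hk => hav k (le_trans hk hi)) i (Nat.zero_le i) le_rfl
    rw [hval i x hi hst]
    exact updC_append_ne hx

end HOCA
namespace HOCA

variable {Q Sig : Type} {A : Aut Q Sig}

theorem runRestrict {L j : ℕ} {cfg : ℕ → Config Q Sig} {lab : ℕ → Sig × HOp Sig}
    (h : IsRun A L cfg lab) (hj : j ≤ L) : IsRun A j cfg lab :=
  fun i hi => h i (lt_of_lt_of_le hi hj)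

theorem lenStep {op : HOp Sig} {st st' : List (Sig × ℕ)}
    (h : applyOp op st = some st') : st.length ≤ st'.length + 1 := by
  cases op with
  | pop =>
    rcases st with _ | ⟨a, _ | ⟨b, t⟩⟩ <;> simp [applyOp] at h
    rw [← h]; simp
  | push τ =>
    rcases st with _ | ⟨⟨a1, a2⟩, t⟩ <;> simp [applyOp] at h
    rw [← h]; simp
  | inc =>
    rcases st with _ | ⟨⟨a1, a2⟩, t⟩ <;> simp [applyOp] at h
    rw [← h]; simp
  | dec =>
    rcases st with _ | ⟨⟨a1, _ | a2⟩, t⟩ <;> simp [applyOp] at h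
    rw [← h]; simp
  | id =>
    simp [applyOp] at h
    rw [← h]
    omega

theorem baseEq {σ : Sig} {c₀ e : ℕ} {x s : List (Sig × ℕ)}
    (h : x ++ (σ, c₀) :: s = (σ, e) :: s) : x = [] ∧ c₀ = e := by
  have hlen := congrArg List.length h
  simp at hlen
  subst hlen
  simp at h
  exact ⟨rfl, h⟩

/-- Return-descend claim at witness length `L`. -/
def CaP (A : Aut Q Sig) (n L : ℕ) : Prop :=
  ∀ (σ : Sig) (c : ℕ) (q q' : Q) s cfg lab, n ≤ c → s ≠ [] →
    IsRun A L cfg lab → cfg 0 = (q, (σ, c + 1) :: s) → cfg L = (q', s) →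
    (∀ i < L, (cfg i).2 ≠ s) → (q, q') ∈ RetSet A ⊤ σ c

/-- Loop-descend claim at witness length `L`. -/
def CbP (A : Aut Q Sig) (n L : ℕ) : Prop :=
  ∀ (σ : Sig) (c : ℕ) (q q' : Q) s cfg lab, n ≤ c →
    IsRun A L cfg lab → cfg 0 = (q, (σ, c + 1) :: s) → cfg L = (q', (σ, c + 1) :: s) →
    (∀ i ≤ L, (cfg i).2 ≠ s) → (q, q') ∈ LoopSet A ⊤ σ c

/-- Prefix simulation claim at length `L`. -/
def CcP (A : Aut Q Sig) (n L : ℕ) : Prop :=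
  ∀ (σ : Sig) (c : ℕ) (q : Q) s s₂ cfg lab,
    IsRun A L cfg lab → cfg 0 = (q, (σ, c) :: s) → s₂ ≠ [] →
    (∀ i ≤ L, (cfg i).2 ≠ s) →
    (∀ i ≤ L, ∀ e, (cfg i).2 = (σ, e) :: s → n + 1 ≤ e) →
    ((cfg L).2).length = s.length + 1 →
    ∃ c' L₂ cfg₂ lab₂, (cfg L).2 = (σ, c' + 1) :: s ∧ n ≤ c' ∧
      IsRun A L₂ cfg₂ lab₂ ∧
      cfg₂ 0 = (q, (σ, c - 1) :: s₂) ∧ cfg₂ L₂ = ((cfg L).1, (σ, c') :: s₂) ∧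
      (∀ i ≤ L₂, ∃ y, y ≠ [] ∧ (cfg₂ i).2 = y ++ s₂)

end HOCA
namespace HOCA
theorem append_ne_self {α : Type _} {y s : List α} (hy : y ≠ []) : y ++ s ≠ s := by
  intro h
  have := congrArg List.length h
  simp at this
  exact hy this
end HOCA
namespace HOCA
theorem consCounterEq {Sig : Type} {σ : Sig} {a b : ℕ} {s t : List (Sig × ℕ)}
    (h : (σ, a) :: s = (σ, b) :: t) : a = b := by
  injection h with h1 h3
  exact congrArg Prod.snd h1
end HOCA
namespace HOCA

variable {Q Sig : Type} {A : Aut Q Sig}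

theorem ccStep (n L : ℕ) (IH : ∀ L' < L, CaP A n L' ∧ CcP A n L') : CcP A n L := by
  intro σ c q s s₂ cfg lab hrun h0 hs₂ hne hlow hend
  have hc : n + 1 ≤ c := hlow 0 (Nat.zero_le L) c (by rw [h0])
  cases L with
  | zero =>
    refine ⟨c - 1, 0, (fun _ => (q, (σ, c - 1) :: s₂)), lab, ?_, by omega, ?_, rfl, ?_, ?_⟩
    · rw [h0]
      have : c - 1 + 1 = c := by omega
      rw [this]
    · intro i hi; omega
    · rw [h0]
    · intro i _; exact ⟨[(σ, c - 1)], by simp, rfl⟩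
  | succ L' =>
    obtain ⟨n₀, rest, htop, hΔ, happ⟩ := hrun 0 (Nat.succ_pos L')
    rw [h0] at htop hΔ happ
    have htop' : (σ, c) :: s = ((lab 0).1, n₀) :: rest := htop
    injection htop' with h1 h2
    injection h1 with hσ hc₀
    rw [← hσ] at hΔ
    have hΔ' : A.Δ q σ (lab 0).2 (cfg 1).1 := hΔ
    have happ' : applyOp (lab 0).2 ((σ, c) :: s) = some (cfg 1).2 := happ
    have hLL : 1 + L' = L' + 1 := Nat.add_comm 1 L'
    have hsub : IsRun A L' (fun i => cfg (1 + i)) (fun i => lab (1 + i)) :=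
      subRun hrun 1 L' (by omega)
    -- generic recursion applier, given the stack at time 1 is (σ, c₁) :: s
    have recurse : ∀ c₁ : ℕ, (cfg 1).2 = (σ, c₁) :: s →
        ∃ c' L₂ cfg₂ lab₂, (cfg (L' + 1)).2 = (σ, c' + 1) :: s ∧ n ≤ c' ∧
          IsRun A L₂ cfg₂ lab₂ ∧
          cfg₂ 0 = ((cfg 1).1, (σ, c₁ - 1) :: s₂) ∧
          cfg₂ L₂ = ((cfg (L' + 1)).1, (σ, c') :: s₂) ∧
          (∀ i ≤ L₂, ∃ y, y ≠ [] ∧ (cfg₂ i).2 = y ++ s₂) := by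
      intro c₁ h1stack
      obtain ⟨c', L₂, cfg₂, lab₂, hL2end, hc', hrun₂, h20, h2L, habove⟩ :=
        (IH L' (by omega)).2 σ c₁ (cfg 1).1 s s₂ _ _ hsub
          (by
            show cfg (1 + 0) = _
            have : cfg (1 + 0) = cfg 1 := by norm_num
            rw [this, ← h1stack])
          hs₂
          (fun i hi => hne (1 + i) (by omega))
          (fun i hi e he => hlow (1 + i) (by omega) e he)
          (by
            show ((cfg (1 + L')).2).length = _
            rw [hLL]; exact hend)
      rw [hLL] at hL2end h2L
      exact ⟨c', L₂, cfg₂, lab₂, hL2end, hc', hrun₂, h20, h2L, habove⟩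
    -- generic assembler: prepend a single new step to the recursed run
    have assemble : ∀ (c₁ : ℕ) (op : HOp Sig) (q₁ : Q),
        q₁ = (cfg 1).1 →
        A.Δ q σ op q₁ →
        applyOp op ((σ, c - 1) :: s₂) = some ((σ, c₁ - 1) :: s₂) →
        (cfg 1).2 = (σ, c₁) :: s →
        ∃ c' L₂ cfg₂ lab₂, (cfg (L' + 1)).2 = (σ, c' + 1) :: s ∧ n ≤ c' ∧
          IsRun A L₂ cfg₂ lab₂ ∧
          cfg₂ 0 = (q, (σ, c - 1) :: s₂) ∧
          cfg₂ L₂ = ((cfg (L' + 1)).1, (σ, c') :: s₂) ∧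
          (∀ i ≤ L₂, ∃ y, y ≠ [] ∧ (cfg₂ i).2 = y ++ s₂) := by
      intro c₁ op q₁ hq₁ hd ha h1stack
      obtain ⟨c', L₂, cfg₂, lab₂, hL2end, hc', hrun₂, h20, h2L, habove⟩ := recurse c₁ h1stack
      have hstep : IsRun A 1
          (fun i => if i = 0 then (q, (σ, c - 1) :: s₂) else (q₁, (σ, c₁ - 1) :: s₂))
          (fun _ => (σ, op)) := mkStep rfl hd ha
      obtain ⟨cfg₃, lab₃, hrun₃, hleft, hright⟩ := concatRun hstep hrun₂
        (by simp [hq₁, h20])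
      refine ⟨c', 1 + L₂, cfg₃, lab₃, hL2end, hc', hrun₃, ?_, ?_, ?_⟩
      · rw [hleft 0 (by omega)]
        rfl
      · rw [hright (1 + L₂) (by omega)]
        simpa using h2L
      · intro i hi
        rcases Nat.eq_zero_or_pos i with rfl | hipos
        · rw [hleft 0 (by omega)]
          exact ⟨[(σ, c - 1)], by simp, rfl⟩
        · rw [hright i hipos]
          exact habove (i - 1) (by omega)
    rcases hop : (lab 0).2 with _ | τ | _ | _ | _
    · -- pop
      rw [hop] at happ'
      rcases hsnil : s with _ | ⟨b, t⟩
      · rw [hsnil] at happ'; simp [applyOp] at happ'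
      · rw [hsnil] at happ'
        simp only [applyOp, Option.some.injEq] at happ'
        exact absurd (happ'.symm.trans hsnil.symm) (hne 1 (by omega))
    · -- push τ : the bump case
      rw [hop] at happ' hΔ'
      have h1stack : (cfg 1).2 = (τ, c) :: (σ, c) :: s := by
        simpa [applyOp] using happ'.symm
      classical
      set P : ℕ → Prop := fun k => 1 ≤ k ∧ ((cfg k).2).length ≤ s.length + 1 with hP
      have hPex : ∃ k, P k := ⟨L' + 1, by omega, le_of_eq hend⟩
      set i₁ := Nat.find hPex with hi₁def
      have hPi₁ : P i₁ := Nat.find_spec hPex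
      have hi₁L : i₁ ≤ L' + 1 := Nat.find_min' hPex ⟨by omega, le_of_eq hend⟩
      have hnotP : ∀ k, 1 ≤ k → k < i₁ → s.length + 2 ≤ ((cfg k).2).length := by
        intro k hk1 hki
        have hnot : ¬ (1 ≤ k ∧ ((cfg k).2).length ≤ s.length + 1) := Nat.find_min hPex hki
        omega
      have hi₁2 : 2 ≤ i₁ := by
        by_contra h2
        have h1 := hPi₁.1
        have h1' : i₁ = 1 := by omega
        have hlen := hPi₁.2
        rw [h1', h1stack] at hlen
        simp at hlen
      -- the stack at i₁ is exactly (σ, c) :: s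
      have hstacki₁ : (cfg i₁).2 = (σ, c) :: s := by
        obtain ⟨x, hxne, hxst⟩ := persistSuffix hrun (a := 1) (b := i₁ - 1)
          (by omega) (s := (σ, c) :: s) (x₀ := [(τ, c)]) (by simp [h1stack]) (by simp)
          (fun k hk1 hk2 => by
            intro hcon
            have := hnotP k (by omega) (by omega)
            rw [hcon] at this
            simp at this)
          (i₁ - 1) (by omega) le_rfl
        obtain ⟨n₁, r₁, -, -, happ₁⟩ := hrun (i₁ - 1) (by omega)
        have hl : i₁ - 1 + 1 = i₁ := by omega
        rw [hxst, hl] at happ₁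
        obtain ⟨x', hx'⟩ := stepSuffix hxne happ₁
        have h2 := hPi₁.2
        rw [hx'] at h2
        simp only [List.length_append, List.length_cons] at h2
        have hx'nil : x' = [] := List.length_eq_zero_iff.mp (by omega)
        rw [hx'nil] at hx'
        simpa using hx'
      -- the inner run [1, i₁] is a return witness for Ret(τ, c)
      have hinner : ((cfg 1).1, (cfg i₁).1) ∈ RetSet A ⊤ τ (c - 1) := by
        have hsub₁ : IsRun A (i₁ - 1) (fun i => cfg (1 + i)) (fun i => lab (1 + i)) :=
          subRun hrun 1 (i₁ - 1) (by omega)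
        obtain ⟨cm, hcm⟩ : ∃ cm, c = cm + 1 := ⟨c - 1, by omega⟩
        have := (IH (i₁ - 1) (by omega)).1 τ cm (cfg 1).1 (cfg i₁).1 ((σ, c) :: s)
          _ _ (by omega) (by simp) hsub₁
          (by
            show cfg (1 + 0) = _
            have h10 : cfg (1 + 0) = cfg 1 := by norm_num
            rw [h10, ← hcm, ← h1stack])
          (by
            have : 1 + (i₁ - 1) = i₁ := by omega
            rw [this, ← hstacki₁])
          (by
            intro i hi
            have hlen := hnotP (1 + i) (by omega) (by omega)
            intro hcon
            rw [hcon] at hlen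
            simp at hlen)
        have hcm1 : cm = c - 1 := by omega
        rwa [hcm1] at this
      -- transplant the inner run onto suffix (σ, c-1) :: s₂
      obtain ⟨LB, cfgB, labB, hrunB, hdecB, hB0, hBL⟩ :=
        retDec hinner (s := (σ, c - 1) :: s₂) (by simp)
      -- recurse on [i₁, L'+1]
      have hsubT : IsRun A (L' + 1 - i₁) (fun i => cfg (i₁ + i)) (fun i => lab (i₁ + i)) :=
        subRun hrun i₁ (L' + 1 - i₁) (by omega)
      obtain ⟨c', L₂, cfg₂, lab₂, hL2end, hc', hrun₂, h20, h2L, habove⟩ :=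
        (IH (L' + 1 - i₁) (by omega)).2 σ c (cfg i₁).1 s s₂ _ _ hsubT
          (by
            show cfg (i₁ + 0) = _
            have hi0 : cfg (i₁ + 0) = cfg i₁ := by norm_num
            rw [hi0, ← hstacki₁])
          hs₂
          (fun i hi => hne (i₁ + i) (by omega))
          (fun i hi e he => hlow (i₁ + i) (by omega) e he)
          (by
            have hiL : i₁ + (L' + 1 - i₁) = L' + 1 := by omega
            show ((cfg (i₁ + (L' + 1 - i₁))).2).length = _
            rw [hiL]; exact hend)
      have hiL : i₁ + (L' + 1 - i₁) = L' + 1 := by omega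
      rw [hiL] at hL2end h2L
      -- build: push step, then bump run, then recursed run
      have hstep : IsRun A 1
          (fun i => if i = 0 then (q, (σ, c - 1) :: s₂) else ((cfg 1).1, (τ, c - 1) :: (σ, c - 1) :: s₂))
          (fun _ => (σ, HOp.push τ)) := mkStep rfl hΔ' (by simp [applyOp])
      obtain ⟨cfgM, labM, hrunM, hleftM, hrightM⟩ := concatRun hstep hrunB
        (by rw [hB0]; simp)
      obtain ⟨cfgF, labF, hrunF, hleftF, hrightF⟩ := concatRun hrunM hrun₂
        (by
          rw [hrightM (1 + LB) (by omega)]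
          simp only [Nat.add_sub_cancel_left]
          rw [hBL, h20])
      refine ⟨c', 1 + LB + L₂, cfgF, labF, hL2end, hc', hrunF, ?_, ?_, ?_⟩
      · rw [hleftF 0 (by omega), hleftM 0 (by omega)]
        rfl
      · rw [hrightF (1 + LB + L₂) (by omega)]
        simpa using h2L
      · intro i hi
        rcases Nat.lt_or_ge i (1 + LB) with hlt | hge
        · rw [hleftF i (by omega), ]
          rcases Nat.eq_zero_or_pos i with rfl | hipos
          · rw [hleftM 0 (by omega)]
            exact ⟨[(σ, c - 1)], by simp, rfl⟩
          · rw [hrightM i hipos]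
            obtain ⟨x, hx, hxne⟩ := hdecB (i - 1) (by omega)
            refine ⟨x ++ [(σ, c - 1)], by simp, ?_⟩
            rw [hx]
            simp
        · rw [hrightF i (by omega)]
          exact habove (i - (1 + LB)) (by omega)
    · -- inc
      rw [hop] at happ' hΔ'
      have h1stack : (cfg 1).2 = (σ, c + 1) :: s := by simpa [applyOp] using happ'.symm
      exact assemble (c + 1) HOp.inc (cfg 1).1 rfl hΔ'
        (by
          have h1 : c - 1 + 1 = c := by omega
          simp only [applyOp, Option.some.injEq, h1, Nat.add_sub_cancel]) h1stack
    · -- dec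
      rw [hop] at happ' hΔ'
      obtain ⟨cm, rfl⟩ : ∃ cm, c = cm + 1 := ⟨c - 1, by omega⟩
      have h1stack : (cfg 1).2 = (σ, cm) :: s := by simpa [applyOp] using happ'.symm
      have hcm : n + 1 ≤ cm := hlow 1 (by omega) cm h1stack
      obtain ⟨k, rfl⟩ : ∃ k, cm = k + 1 := ⟨cm - 1, by omega⟩
      exact assemble (k + 1) HOp.dec (cfg 1).1 rfl hΔ' (by simp [applyOp]) h1stack
    · -- id
      rw [hop] at happ' hΔ'
      have h1stack : (cfg 1).2 = (σ, c) :: s := by simpa [applyOp] using happ'.symm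
      exact assemble c HOp.id (cfg 1).1 rfl hΔ' (by simp [applyOp]) h1stack

end HOCA
namespace HOCA

variable {Q Sig : Type} {A : Aut Q Sig}

theorem caStep (n L : ℕ)
    (hH : ∀ σ : Sig, RetSet A ⊤ σ (n + 1) ⊆ RetSet A ⊤ σ n)
    (IH : ∀ L' < L, CcP A n L') : CaP A n L := by
  intro σ c q q' s cfg lab hn hs hrun h0 hL hav
  rcases eq_or_lt_of_le hn with rfl | hc1
  · exact hH σ ⟨s, L, cfg, lab, hs, hrun, h0, hL, hav, heightTop L cfg⟩
  · have hL1 : 1 ≤ L := by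
      by_contra hL0
      have h00 : L = 0 := by omega
      rw [h00, h0] at hL
      have := congrArg (fun p => (Prod.snd p : List (Sig × ℕ)).length) hL
      simp at this
    classical
    have hPex : ∃ k, 1 ≤ k ∧ ((cfg k).2 = s ∨ (cfg k).2 = (σ, n + 1) :: s) :=
      ⟨L, hL1, Or.inl (by rw [hL])⟩
    set i₁ := Nat.find hPex with hi₁def
    obtain ⟨hi₁1, hbadi₁⟩ := Nat.find_spec hPex
    rw [← hi₁def] at hi₁1 hbadi₁
    have hi₁L : i₁ ≤ L := Nat.find_min' hPex ⟨hL1, Or.inl (by rw [hL])⟩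
    have hnb : ∀ k, 1 ≤ k → k < i₁ →
        ¬((cfg k).2 = s ∨ (cfg k).2 = (σ, n + 1) :: s) := by
      intro k hk1 hki hcon
      exact Nat.find_min hPex hki ⟨hk1, hcon⟩
    have hhigh : ∀ i, i < i₁ → ∃ x c₀, n + 2 ≤ c₀ ∧ (cfg i).2 = x ++ (σ, c₀) :: s := by
      intro i hi
      obtain ⟨x, c₀, hc₀, hx⟩ := basePersist hrun (fun e => n + 2 ≤ e) (n + 1)
        (by intro cc e hce hadj; omega) (a := 0) (b := i) (by omega)
        (σ := σ) (s := s) (c₀ := c + 1) (by rw [h0]) (by omega)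
        (by
          intro k hk0 hki
          refine ⟨fun hcon => hnb k (by omega) (by omega) (Or.inl hcon),
            fun hcon => absurd (Or.inr hcon) (hnb k (by omega) (by omega))⟩)
        i (Nat.zero_le i) le_rfl
      exact ⟨x, c₀, hc₀, hx⟩
    have hlowpre : ∀ i, i < i₁ → ∀ e, (cfg i).2 = (σ, e) :: s → n + 2 ≤ e := by
      intro i hi e he
      obtain ⟨x, c₀, hc₀, hx⟩ := hhigh i hi
      have := baseEq (x := x) (σ := σ) (by rw [← hx, he])
      omega
    rcases hbadi₁ with hsi | hbi
    · -- the first "bad" configuration is `s`: it is final, preceded by a pop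
      have hi₁eq : i₁ = L := by
        rcases eq_or_lt_of_le hi₁L with h | h
        · exact h
        · exact absurd hsi (hav i₁ h)
      obtain ⟨x, c₀, hc₀, hxst⟩ := hhigh (L - 1) (by omega)
      obtain ⟨nn, rr, htopL, hΔL, happL⟩ := hrun (L - 1) (by omega)
      have hl : L - 1 + 1 = L := by omega
      rw [hl] at hΔL happL
      have hxnil : x = [] := by
        rcases eq_or_ne x [] with h | h
        · exact h
        · exfalso
          rw [hxst] at happL
          obtain ⟨x', hx'⟩ := stepSuffix h happL
          rw [hL] at hx'
          have := congrArg List.length hx'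
          simp at this
          omega
      rw [hxnil] at hxst
      simp at hxst
      have hstL1 : (cfg (L - 1)).2 = (σ, c₀) :: s := hxst
      rw [hstL1] at happL htopL
      have hlabσ : (lab (L - 1)).1 = σ := by
        injection htopL with h1 h2
        injection h1 with ha hb
        exact ha.symm
      have hLs : (cfg L).2 = s := by rw [hL]
      rw [hLs] at happL
      have hpop : (lab (L - 1)).2 = HOp.pop := by
        rcases stepBase happL with ⟨-, hp⟩ | ⟨e, he, -⟩ | ⟨τ, -, hp⟩ | hsame
        · exact hp
        · exfalso; have := congrArg List.length he; simp at this
        · exfalso; have := congrArg List.length hp; simp at this; omega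
        · exfalso; have := congrArg List.length hsame; simp at this
      obtain ⟨c'', L₂, cfg₂, lab₂, hend2, hc'', hrun₂, h₂0, h₂L, habove⟩ :=
        IH (L - 1) (by omega) σ (c + 1) q s s _ _ (runRestrict hrun (by omega)) h0 hs
          (fun i hi => hav i (by omega))
          (fun i hi e he => by have := hlowpre i (by omega) e he; omega)
          (by rw [hstL1]; simp)
      have hΔ' : A.Δ (cfg (L - 1)).1 σ HOp.pop q' := by
        rw [hlabσ, hpop] at hΔL
        have hq' : (cfg L).1 = q' := by rw [hL]
        rwa [hq'] at hΔL
      obtain ⟨b, t, rfl⟩ := List.exists_cons_of_ne_nil hs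
      have hstep : IsRun A 1
          (fun i => if i = 0 then ((cfg (L - 1)).1, (σ, c'') :: b :: t) else (q', b :: t))
          (fun _ => (σ, HOp.pop)) := mkStep rfl hΔ' (by simp [applyOp])
      obtain ⟨cfgF, labF, hrunF, hleft, hright⟩ := concatRun hrun₂ hstep
        (by rw [h₂L]; simp)
      refine ⟨b :: t, L₂ + 1, cfgF, labF, by simp, hrunF, ?_, ?_, ?_, heightTop _ _⟩
      · rw [hleft 0 (by omega), h₂0]
        simp
      · rw [hright (L₂ + 1) (by omega)]
        simp
      · intro i hi
        rw [hleft i (by omega)]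
        obtain ⟨y, hy, hyst⟩ := habove i (by omega)
        rw [hyst]
        exact append_ne_self hy
    · -- the first "bad" configuration is `(σ, n+1) :: s`
      have hi₁lt : i₁ < L := by
        rcases eq_or_lt_of_le hi₁L with h | h
        · exfalso
          rw [h, hL] at hbi
          have := congrArg List.length hbi
          simp at this
        · exact h
      obtain ⟨c'', L₂, cfg₂, lab₂, hend2, hc'', hrun₂, h₂0, h₂L, habove⟩ :=
        IH i₁ (by omega) σ (c + 1) q s s _ _ (runRestrict hrun (by omega)) h0 hs
          (fun i hi => hav i (by omega))
          (fun i hi e he => by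
            rcases eq_or_lt_of_le hi with heq | hlt
            · rw [heq] at he
              have hb := consCounterEq (hbi.symm.trans he)
              omega
            · have := hlowpre i hlt e he; omega)
          (by rw [hbi]; simp)
      have hc''n : c'' = n := by
        have hb := consCounterEq (hbi.symm.trans hend2)
        omega
      have hsuffmem : ((cfg i₁).1, q') ∈ RetSet A ⊤ σ (n + 1) := by
        refine ⟨s, L - i₁, (fun i => cfg (i₁ + i)), (fun i => lab (i₁ + i)), hs,
          subRun hrun i₁ (L - i₁) (by omega), ?_, ?_, ?_, heightTop _ _⟩
        · show cfg (i₁ + 0) = _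
          have h10 : cfg (i₁ + 0) = cfg i₁ := by norm_num
          rw [h10, ← hbi]
        · show cfg (i₁ + (L - i₁)) = _
          have h11 : i₁ + (L - i₁) = L := by omega
          rw [h11, hL]
        · intro i hi
          exact hav (i₁ + i) (by omega)
      obtain ⟨LR, cfgR, labR, hrunR, hdecR, hR0, hRL⟩ := retDec (hH σ hsuffmem) hs
      obtain ⟨cfgF, labF, hrunF, hleft, hright⟩ := concatRun hrun₂ hrunR
        (by rw [h₂L, hR0, hc''n])
      refine ⟨s, L₂ + LR, cfgF, labF, hs, hrunF, ?_, ?_, ?_, heightTop _ _⟩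
      · rw [hleft 0 (by omega), h₂0]
        simp
      · rw [hright (L₂ + LR) (by omega)]
        simpa using hRL
      · intro i hi
        rcases le_or_gt i L₂ with hle | hgt
        · rw [hleft i hle]
          obtain ⟨y, hy, hyst⟩ := habove i hle
          rw [hyst]
          exact append_ne_self hy
        · rw [hright i (by omega)]
          obtain ⟨x, hx, hxne⟩ := hdecR (i - L₂) (by omega)
          rw [hx]
          exact append_ne_self (hxne (by omega))

end HOCA
namespace HOCA

variable {Q Sig : Type} {A : Aut Q Sig}

theorem cbStep (n L : ℕ)
    (hH2 : ∀ σ : Sig, LoopSet A ⊤ σ (n + 1) ⊆ LoopSet A ⊤ σ n)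
    (hcc : ∀ L' ≤ L, CcP A n L') : CbP A n L := by
  intro σ c q q' s cfg lab hn hrun h0 hL hav
  rcases eq_or_lt_of_le hn with rfl | hc1
  · exact hH2 σ ⟨s, L, cfg, lab, hrun, h0, hL, hav, heightTop L cfg⟩
  · classical
    have hLstack : (cfg L).2 = (σ, c + 1) :: s := by rw [hL]
    by_cases hbadex : ∃ k, 1 ≤ k ∧ k ≤ L ∧ (cfg k).2 = (σ, n + 1) :: s
    · -- there is a visit to base counter n+1
      set i₁ := Nat.find hbadex with hi₁def
      obtain ⟨hi₁1, hi₁L, hbi⟩ := Nat.find_spec hbadex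
      rw [← hi₁def] at hi₁1 hi₁L hbi
      have hnb : ∀ k, 1 ≤ k → k < i₁ → (cfg k).2 ≠ (σ, n + 1) :: s := by
        intro k h1 hk hcon
        exact Nat.find_min hbadex hk ⟨h1, by omega, hcon⟩
      set j₁ := Nat.findGreatest (fun k => (cfg k).2 = (σ, n + 1) :: s) L with hj₁def
      have hj₁ : (cfg j₁).2 = (σ, n + 1) :: s :=
        Nat.findGreatest_spec (P := fun k => (cfg k).2 = (σ, n + 1) :: s) hi₁L hbi
      have hij : i₁ ≤ j₁ :=
        Nat.le_findGreatest (P := fun k => (cfg k).2 = (σ, n + 1) :: s) hi₁L hbi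
      have hj₁L : j₁ ≤ L :=
        Nat.findGreatest_le (P := fun k => (cfg k).2 = (σ, n + 1) :: s) L
      have hgt : ∀ k, j₁ < k → k ≤ L → (cfg k).2 ≠ (σ, n + 1) :: s := by
        intro k hk1 hk2
        exact Nat.findGreatest_is_greatest (P := fun k => (cfg k).2 = (σ, n + 1) :: s) hk1 hk2
      have hj₁lt : j₁ < L := by
        rcases eq_or_lt_of_le hj₁L with h | h
        · exfalso
          rw [h, hLstack] at hj₁
          have := consCounterEq hj₁
          omega
        · exact h
      have hhigh : ∀ i, i < i₁ → ∃ x c₀, n + 2 ≤ c₀ ∧ (cfg i).2 = x ++ (σ, c₀) :: s := by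
        intro i hi
        obtain ⟨x, c₀, hc₀, hx⟩ := basePersist hrun (fun e => n + 2 ≤ e) (n + 1)
          (by intro cc e hce hadj; omega) (a := 0) (b := i) (by omega)
          (σ := σ) (s := s) (c₀ := c + 1) (by rw [h0]) (by omega)
          (by
            intro k hk0 hki
            exact ⟨hav k (by omega),
              fun hcon => absurd hcon (hnb k (by omega) (by omega))⟩)
          i (Nat.zero_le i) le_rfl
        exact ⟨x, c₀, hc₀, hx⟩
      -- prefix
      obtain ⟨c'', L₂, cfg₂, lab₂, hend2, hc'', hrun₂, h₂0, h₂L, habove⟩ :=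
        hcc i₁ (by omega) σ (c + 1) q s [(σ, 0)] _ _ (runRestrict hrun (by omega)) h0
          (by simp)
          (fun i hi => hav i (by omega))
          (fun i hi e he => by
            rcases eq_or_lt_of_le hi with heq | hlt
            · rw [heq] at he
              have hb := consCounterEq (hbi.symm.trans he)
              omega
            · obtain ⟨x, c₀, hc₀, hx⟩ := hhigh i hlt
              have hb := baseEq (x := x) (σ := σ) (by rw [← hx, he])
              omega)
          (by rw [hbi]; simp)
      have hc''n : c'' = n := by
        have hb := consCounterEq (hbi.symm.trans hend2)
        omega
      -- middle loop
      have hmidmem : ((cfg i₁).1, (cfg j₁).1) ∈ LoopSet A ⊤ σ (n + 1) := by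
        refine ⟨s, j₁ - i₁, (fun i => cfg (i₁ + i)), (fun i => lab (i₁ + i)),
          subRun hrun i₁ (j₁ - i₁) (by omega), ?_, ?_, ?_, heightTop _ _⟩
        · show cfg (i₁ + 0) = _
          have h10 : cfg (i₁ + 0) = cfg i₁ := by norm_num
          rw [h10, ← hbi]
        · show cfg (i₁ + (j₁ - i₁)) = _
          have h11 : i₁ + (j₁ - i₁) = j₁ := by omega
          rw [h11, ← hj₁]
        · intro i hi
          exact hav (i₁ + i) (by omega)
      obtain ⟨LM, cfgM, labM, hrunM, hdecM, hM0, hML⟩ :=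
        loopDec (hH2 σ hmidmem) (s := [(σ, 0)]) (by simp)
      -- tail
      have tlow : ∀ i ≤ L - j₁, ∀ e, (cfg (j₁ + i)).2 = (σ, e) :: s → n + 1 ≤ e := by
        intro i hi e he
        rcases Nat.eq_zero_or_pos i with rfl | hpos
        · have h10 : j₁ + 0 = j₁ := by omega
          rw [h10] at he
          have := consCounterEq (hj₁.symm.trans he)
          omega
        · by_contra hlt
          push_neg at hlt
          obtain ⟨x, c₀, hc₀, hx⟩ := basePersist hrun (fun v => v ≤ n) (n + 1)
            (by intro cc e' hce hadj; omega) (a := j₁ + i) (b := L) le_rfl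
            (σ := σ) (s := s) (c₀ := e) he (by omega)
            (by
              intro k hk1 hk2
              exact ⟨hav k hk2, fun hcon => absurd hcon (hgt k (by omega) hk2)⟩)
            L (by omega) le_rfl
          have hb := baseEq (x := x) (σ := σ) (by rw [← hx, hLstack])
          omega
      obtain ⟨cT, LT, cfgT, labT, hendT, hcT, hrunT, hT0, hTL, haboveT⟩ :=
        hcc (L - j₁) (by omega) σ (n + 1) (cfg j₁).1 s [(σ, 0)] _ _
          (subRun hrun j₁ (L - j₁) (by omega))
          (by
            show cfg (j₁ + 0) = _
            have h10 : cfg (j₁ + 0) = cfg j₁ := by norm_num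
            rw [h10, ← hj₁])
          (by simp)
          (fun i hi => hav (j₁ + i) (by omega))
          tlow
          (by
            have h11 : j₁ + (L - j₁) = L := by omega
            show ((cfg (j₁ + (L - j₁))).2).length = _
            rw [h11, hLstack]
            simp)
      have h11 : j₁ + (L - j₁) = L := by omega
      rw [h11] at hendT hTL
      have hcTc : cT = c := by
        have := consCounterEq (hLstack.symm.trans hendT)
        omega
      -- concatenate the three runs
      obtain ⟨cfgPM, labPM, hrunPM, hleftPM, hrightPM⟩ := concatRun hrun₂ hrunM
        (by rw [h₂L, hM0, hc''n])
      obtain ⟨cfgF, labF, hrunF, hleftF, hrightF⟩ := concatRun hrunPM hrunT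
        (by
          rw [hrightPM (L₂ + LM) (by omega)]
          simp only [Nat.add_sub_cancel_left]
          rw [hML, hT0]
          simp)
      refine ⟨[(σ, 0)], L₂ + LM + LT, cfgF, labF, hrunF, ?_, ?_, ?_, heightTop _ _⟩
      · rw [hleftF 0 (by omega), hleftPM 0 (by omega), h₂0]
        simp
      · rw [hrightF (L₂ + LM + LT) (by omega)]
        simp only [Nat.add_sub_cancel_left]
        rw [hTL, hcTc, hL]
      · intro i hi
        rcases le_or_gt i (L₂ + LM) with hle | hgt2
        · rw [hleftF i hle]
          rcases le_or_gt i L₂ with hle2 | hgt3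
          · rw [hleftPM i hle2]
            obtain ⟨y, hy, hyst⟩ := habove i hle2
            rw [hyst]
            exact append_ne_self hy
          · rw [hrightPM i (by omega)]
            obtain ⟨y, hy, hyst⟩ := hdecM (i - L₂) (by omega)
            rw [hyst]
            exact append_ne_self hy
        · rw [hrightF i (by omega)]
          obtain ⟨y, hy, hyst⟩ := haboveT (i - (L₂ + LM)) (by omega)
          rw [hyst]
          exact append_ne_self hy
    · -- no visit to base counter n+1: shift the whole run
      have hnb : ∀ k, 1 ≤ k → k ≤ L → (cfg k).2 ≠ (σ, n + 1) :: s := by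
        intro k h1 h2 hcon
        exact hbadex ⟨k, h1, h2, hcon⟩
      have hlow : ∀ i ≤ L, ∀ e, (cfg i).2 = (σ, e) :: s → n + 1 ≤ e := by
        intro i hi e he
        obtain ⟨x, c₀, hc₀, hx⟩ := basePersist hrun (fun e => n + 2 ≤ e) (n + 1)
          (by intro cc e' hce hadj; omega) (a := 0) (b := i) hi
          (σ := σ) (s := s) (c₀ := c + 1) (by rw [h0]) (by omega)
          (by
            intro k hk0 hki
            exact ⟨hav k (by omega),
              fun hcon => absurd hcon (hnb k (by omega) (by omega))⟩)
          i (Nat.zero_le i) le_rfl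
        have hb := baseEq (x := x) (σ := σ) (by rw [← hx, he])
        omega
      obtain ⟨c'', L₂, cfg₂, lab₂, hend2, hc'', hrun₂, h₂0, h₂L, habove⟩ :=
        hcc L le_rfl σ (c + 1) q s [(σ, 0)] _ _ hrun h0 (by simp) hav hlow
          (by rw [hLstack]; simp)
      have hc''c : c'' = c := by
        have := consCounterEq (hLstack.symm.trans hend2)
        omega
      refine ⟨[(σ, 0)], L₂, cfg₂, lab₂, hrun₂, ?_, ?_, ?_, heightTop _ _⟩
      · rw [h₂0]
        simp
      · rw [h₂L, hc''c, hL]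
      · intro i hi
        obtain ⟨y, hy, hyst⟩ := habove i hi
        rw [hyst]
        exact append_ne_self hy

end HOCA
namespace HOCA

variable {Q Sig : Type} {A : Aut Q Sig}

theorem bigLemma (n : ℕ)
    (hH : ∀ σ : Sig, RetSet A ⊤ σ (n + 1) ⊆ RetSet A ⊤ σ n)
    (hH2 : ∀ σ : Sig, LoopSet A ⊤ σ (n + 1) ⊆ LoopSet A ⊤ σ n) :
    ∀ L, CaP A n L ∧ CbP A n L ∧ CcP A n L := by
  intro L
  induction L using Nat.strong_induction_on with
  | _ L IH =>
    have hcc : CcP A n L := ccStep n L (fun L' hL' => ⟨(IH L' hL').1, (IH L' hL').2.2⟩)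
    have hccle : ∀ L' ≤ L, CcP A n L' := by
      intro L' hL'
      rcases eq_or_lt_of_le hL' with rfl | h
      · exact hcc
      · exact (IH L' h).2.2
    exact ⟨caStep n L hH (fun L' hL' => (IH L' hL').2.2), cbStep n L hH2 hccle, hcc⟩

theorem retDescend (n : ℕ)
    (hH : ∀ σ : Sig, RetSet A ⊤ σ (n + 1) ⊆ RetSet A ⊤ σ n)
    (hH2 : ∀ σ : Sig, LoopSet A ⊤ σ (n + 1) ⊆ LoopSet A ⊤ σ n)
    {σ : Sig} {m : ℕ} (hm : n ≤ m) :
    RetSet A ⊤ σ (m + 1) ⊆ RetSet A ⊤ σ m := by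
  rintro ⟨q, q'⟩ ⟨s, L, cfg, lab, hs, hrun, h0, hL, hav, -⟩
  exact (bigLemma n hH hH2 L).1 σ m q q' s cfg lab hm hs hrun h0 hL hav

theorem loopDescend (n : ℕ)
    (hH : ∀ σ : Sig, RetSet A ⊤ σ (n + 1) ⊆ RetSet A ⊤ σ n)
    (hH2 : ∀ σ : Sig, LoopSet A ⊤ σ (n + 1) ⊆ LoopSet A ⊤ σ n)
    {σ : Sig} {m : ℕ} (hm : n ≤ m) :
    LoopSet A ⊤ σ (m + 1) ⊆ LoopSet A ⊤ σ m := by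
  rintro ⟨q, q'⟩ ⟨s, L, cfg, lab, hrun, h0, hL, hav, -⟩
  exact (bigLemma n hH hH2 L).2.1 σ m q q' s cfg lab hm hrun h0 hL hav

end HOCA
/-- For every 2-HOCA without zero-test there is a
deterministic finite word automaton over the unary alphabet `{⊥}` with at most
`2·(|Σ|·|Q|² + 1)` states which, after reading `⊥ⁿ`, is in the state
`(Ret_∞((σ,n)), Loop_∞((σ,n)))_{σ∈Σ}` for every `n ∈ ℕ`.  (The states of the
automaton are such tuples; `δ` is its unary transition function.) -/
theorem hoca_unary_dfa_for_ret_loop {Q Sig : Type} [Fintype Q] [Fintype Sig]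
    (A : HOCA.Aut Q Sig) :
    ∃ (S : Finset (Sig → Set (Q × Q) × Set (Q × Q)))
      (init : Sig → Set (Q × Q) × Set (Q × Q))
      (δ : (Sig → Set (Q × Q) × Set (Q × Q)) → (Sig → Set (Q × Q) × Set (Q × Q))),
      init ∈ S ∧ (∀ x ∈ S, δ x ∈ S) ∧
      S.card ≤ 2 * (Fintype.card Sig * Fintype.card Q ^ 2 + 1) ∧
      ∀ n : ℕ, δ^[n] init =
        fun σ => (HOCA.RetSet A ⊤ σ n, HOCA.LoopSet A ⊤ σ n) := by
  classical
  set f : ℕ → (Sig → Set (Q × Q) × Set (Q × Q)) :=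
    fun m σ => (HOCA.RetSet A ⊤ σ m, HOCA.LoopSet A ⊤ σ m) with hf
  have hmonoLe : ∀ a b, a ≤ b → ∀ σ : Sig,
      (f a σ).1 ⊆ (f b σ).1 ∧ (f a σ).2 ⊆ (f b σ).2 := by
    intro a b hab
    induction b, hab using Nat.le_induction with
    | base => exact fun σ => ⟨subset_rfl, subset_rfl⟩
    | succ b hab ih =>
      exact fun σ => ⟨(ih σ).1.trans (HOCA.monoRet σ b), (ih σ).2.trans (HOCA.monoLoop σ b)⟩
  have hplateau : ∀ nn, f nn = f (nn + 1) → ∀ m, nn ≤ m → f m = f (m + 1) := by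
    intro nn heq m hm
    have hH : ∀ σ : Sig, HOCA.RetSet A ⊤ σ (nn + 1) ⊆ HOCA.RetSet A ⊤ σ nn := by
      intro σ
      have e := congrFun heq σ
      exact le_of_eq (congrArg Prod.fst e).symm
    have hH2 : ∀ σ : Sig, HOCA.LoopSet A ⊤ σ (nn + 1) ⊆ HOCA.LoopSet A ⊤ σ nn := by
      intro σ
      have e := congrFun heq σ
      exact le_of_eq (congrArg Prod.snd e).symm
    funext σ
    have h1 : (f (m + 1) σ).1 ⊆ (f m σ).1 := HOCA.retDescend nn hH hH2 hm
    have h2 : (f (m + 1) σ).2 ⊆ (f m σ).2 := HOCA.loopDescend nn hH hH2 hm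
    have e1 : (f m σ).1 = (f (m + 1) σ).1 :=
      Set.Subset.antisymm (hmonoLe m (m + 1) (by omega) σ).1 h1
    have e2 : (f m σ).2 = (f (m + 1) σ).2 :=
      Set.Subset.antisymm (hmonoLe m (m + 1) (by omega) σ).2 h2
    exact Prod.ext_iff.mpr ⟨e1, e2⟩
  have hconst : ∀ nn, f nn = f (nn + 1) → ∀ m, nn ≤ m → f m = f nn := by
    intro nn heq m hm
    induction m, hm using Nat.le_induction with
    | base => rfl
    | succ m hm ih => exact (hplateau nn heq m hm).symm.trans ih
  have hcons : ∀ a b, f a = f b → f (a + 1) = f (b + 1) := by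
    have key : ∀ a b, a < b → f a = f b → f (a + 1) = f (b + 1) := by
      intro a b hab heq
      have hstep : f a = f (a + 1) := by
        funext σ
        have e := congrFun heq σ
        have h1 := hmonoLe a (a + 1) (by omega) σ
        have h2 := hmonoLe (a + 1) b hab σ
        refine Prod.ext_iff.mpr ⟨Set.Subset.antisymm h1.1 ?_, Set.Subset.antisymm h1.2 ?_⟩
        · exact h2.1.trans (le_of_eq (congrArg Prod.fst e).symm)
        · exact h2.2.trans (le_of_eq (congrArg Prod.snd e).symm)
      have hca := hconst a hstep
      exact (hca (a + 1) (by omega)).trans (hca (b + 1) (by omega)).symm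
    intro a b heq
    rcases lt_trichotomy a b with h | h | h
    · exact key a b h heq
    · rw [h]
    · exact (key b a h heq.symm).symm
  set N := 2 * (Fintype.card Sig * Fintype.card Q ^ 2) with hN
  set Tot : (Sig → Set (Q × Q) × Set (Q × Q)) → Set (Sig × Bool × Q × Q) :=
    fun v => {x | if x.2.1 then (x.2.2.1, x.2.2.2) ∈ (v x.1).1
      else (x.2.2.1, x.2.2.2) ∈ (v x.1).2} with hTot
  have hTotInj : ∀ u v, Tot u = Tot v → u = v := by
    intro u v h
    funext σ
    have h1 : (u σ).1 = (v σ).1 := by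
      ext p
      have := Set.ext_iff.mp h (σ, true, p.1, p.2)
      simpa [hTot] using this
    have h2 : (u σ).2 = (v σ).2 := by
      ext p
      have := Set.ext_iff.mp h (σ, false, p.1, p.2)
      simpa [hTot] using this
    exact Prod.ext_iff.mpr ⟨h1, h2⟩
  have hTotMono : ∀ a b, a ≤ b → Tot (f a) ⊆ Tot (f b) := by
    intro a b hab x hx
    simp only [hTot, Set.mem_setOf_eq] at hx ⊢
    by_cases hb : x.2.1
    · rw [if_pos hb] at hx ⊢
      exact (hmonoLe a b hab x.1).1 hx
    · rw [if_neg hb] at hx ⊢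
      exact (hmonoLe a b hab x.1).2 hx
  have hcard : ∀ m, (∀ k, k < m → f k ≠ f (k + 1)) → m ≤ (Tot (f m)).ncard := by
    intro m
    induction m with
    | zero => exact fun _ => Nat.zero_le _
    | succ m ih =>
      intro h
      have hm := ih (fun k hk => h k (by omega))
      have hss : Tot (f m) ⊂ Tot (f (m + 1)) := by
        refine ⟨hTotMono m (m + 1) (by omega), fun hsub => ?_⟩
        exact h m (by omega) (hTotInj _ _ (Set.Subset.antisymm (hTotMono m (m + 1) (by omega)) hsub))
      have := Set.ncard_lt_ncard hss (Set.toFinite _)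
      omega
  have hcardty : Nat.card (Sig × Bool × Q × Q) = N := by
    simp only [Nat.card_eq_fintype_card, Fintype.card_prod, Fintype.card_bool, hN]
    ring
  have hstab : f N = f (N + 1) := by
    by_cases hplat : ∃ k, k < N ∧ f k = f (k + 1)
    · obtain ⟨k, hk, he⟩ := hplat
      rw [hconst k he N (by omega), hconst k he (N + 1) (by omega)]
    · push_neg at hplat
      have h1 := hcard N hplat
      have h2 : (Tot (f (N + 1))).ncard ≤ N := by
        rw [← hcardty, ← Set.ncard_univ]
        exact Set.ncard_le_ncard (Set.subset_univ _) (Set.toFinite _)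
      exact hTotInj _ _ (Set.eq_of_subset_of_ncard_le (hTotMono N (N + 1) (by omega))
        (by omega) (Set.toFinite _))
  have hconstN := hconst N hstab
  set δ : (Sig → Set (Q × Q) × Set (Q × Q)) → (Sig → Set (Q × Q) × Set (Q × Q)) :=
    fun v => if h : ∃ k, f k = v then f (h.choose + 1) else v with hδ
  have hδf : ∀ k, δ (f k) = f (k + 1) := by
    intro k
    have hex : ∃ kk, f kk = f k := ⟨k, rfl⟩
    rw [hδ]
    simp only [dif_pos hex]
    exact hcons _ k hex.choose_spec
  have hiter : ∀ m, δ^[m] (f 0) = f m := by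
    intro m
    induction m with
    | zero => rfl
    | succ m ih => rw [Function.iterate_succ_apply', ih, hδf]
  refine ⟨(Finset.range (N + 1)).image f, f 0, δ, ?_, ?_, ?_, ?_⟩
  · exact Finset.mem_image.mpr ⟨0, Finset.mem_range.mpr (by omega), rfl⟩
  · intro x hx
    obtain ⟨k, hk, rfl⟩ := Finset.mem_image.mp hx
    rw [hδf k]
    have hkN : k ≤ N := by
      have := Finset.mem_range.mp hk
      omega
    rcases eq_or_lt_of_le hkN with heq | hlt
    · rw [heq, hconstN (N + 1) (by omega)]
      exact Finset.mem_image.mpr ⟨N, Finset.mem_range.mpr (by omega), rfl⟩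
    · exact Finset.mem_image.mpr ⟨k + 1, Finset.mem_range.mpr (by omega), rfl⟩
  · calc ((Finset.range (N + 1)).image f).card ≤ (Finset.range (N + 1)).card :=
          Finset.card_image_le
      _ = N + 1 := Finset.card_range _
      _ ≤ 2 * (Fintype.card Sig * Fintype.card Q ^ 2 + 1) := by omega
  · intro m
    rw [hiter m, hf]
end

section
/- The set C = { (q, (⊥,m)(⊥,m)) : m ∈ ℕ } of level-2 counter configurations is recognizable by a tree automaton under the tree encoding E (i.e., E(C) is a regular tree language), but C is not recognizable by any alternating 2-store automaton. -/
/-! Binary trees, tree automata, the tree encoding `E` of level-2 counter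
configurations, and (alternating) 2-store automata. -/

namespace Enc

/-- Binary trees with node labels in `α` (`nil` is the empty tree). -/
inductive BTree (α : Type) where
  | nil : BTree α
  | node (a : α) (l r : BTree α) : BTree α

/-- A (nondeterministic, bottom-up) finite tree automaton with states `St`. -/
structure TreeAut (α St : Type) where
  leaf : Set St
  trans : α → St → St → Set St
  accept : Set St

/-- Evaluation relation of a tree automaton. -/
inductive TreeAutEval {α St : Type} (A : TreeAut α St) : BTree α → St → Prop
  | nil {s : St} : s ∈ A.leaf → TreeAutEval A .nil s
  | node {a : α} {l r : BTree α} {sl sr s : St} :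
      TreeAutEval A l sl → TreeAutEval A r sr → s ∈ A.trans a sl sr →
      TreeAutEval A (.node a l r) s

def TreeAut.Accepts {α St : Type} (A : TreeAut α St) (t : BTree α) : Prop :=
  ∃ s ∈ A.accept, TreeAutEval A t s

/-- A set of trees is regular iff it is recognized by a tree automaton with a
finite state set. -/
def TreeRegular {α : Type} (T : Set (BTree α)) : Prop :=
  ∃ (St : Type) (_ : Fintype St) (A : TreeAut α St), T = { t | A.Accepts t }

/-- The tree encoding `E` of a level-2 storage `p ∈ (Σ × ℕ)⁺` (as a relation;
`bot` is the designated symbol `⊥` labelling inner nodes):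
`E(∅) = ∅`; if the first counter is `0` then `E((σ,0)·p_r) = ⊥(σ, E(p_r))`;
otherwise split `p` into the maximal prefix `p_l` with all counters `≥ 1`
(decremented) and the rest `p_r`, and `E(p) = ⊥(E(p_l), E(p_r))`. -/
inductive Encodes {Sig Q : Type} (bot : Sig) :
    List (Sig × ℕ) → BTree (Sig ⊕ Q) → Prop
  | nil : Encodes bot [] .nil
  | zero {σ : Sig} {pr : List (Sig × ℕ)} {t : BTree (Sig ⊕ Q)} :
      Encodes bot pr t →
      Encodes bot ((σ, 0) :: pr)
        (.node (.inl bot) (.node (.inl σ) .nil .nil) t)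
  | pos {pl pr : List (Sig × ℕ)} {tl tr : BTree (Sig ⊕ Q)} :
      pl ≠ [] → (∀ e ∈ pl, 1 ≤ e.2) →
      (∀ x, pr.head? = some x → x.2 = 0) →
      Encodes bot (pl.map (fun e => (e.1, e.2 - 1))) tl →
      Encodes bot pr tr →
      Encodes bot (pl ++ pr) (.node (.inl bot) tl tr)

/-- Encoding of a configuration `(q,p)`: the tree `q(E(p), ∅)`. -/
def EncodesCfg {Sig Q : Type} (bot : Sig) (c : Q × List (Sig × ℕ))
    (t : BTree (Sig ⊕ Q)) : Prop :=
  ∃ tp, Encodes bot c.2 tp ∧ t = .node (.inr c.1) tp .nil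

/-- The set of encodings of a set of configurations. -/
def EncImage {Sig Q : Type} (bot : Sig) (C : Set (Q × List (Sig × ℕ))) :
    Set (BTree (Sig ⊕ Q)) :=
  { t | ∃ c ∈ C, EncodesCfg bot c t }

/-- A deterministic finite automaton over the unary alphabet `{⊥}`. -/
structure UnaryDFA (S : Type) where
  init : S
  next : S → S
  acc : Set S

/-- `D` accepts the word `⊥^m`. -/
def UnaryDFA.Accepts {S : Type} (D : UnaryDFA S) (m : ℕ) : Prop :=
  D.next^[m] D.init ∈ D.acc

/-- An alternating 2-store automaton: states `Q'` (partitioned into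
existential (`exQ = true`) and universal states), final states, and a finite
set `T` of transitions, each with a source state, a symbol label, a unary
finite automaton checking the counter, and a destination state. -/
structure TwoStore (Q' Sig S T : Type) where
  exQ : Q' → Bool
  final : Set Q'
  src : T → Q'
  sym : T → Sig
  chk : T → UnaryDFA S
  dst : T → Q'

/-- Accepting computations of a 2-store automaton on a storage, processed
entry by entry; at existential states one matching transition must succeed,
at universal states some transition must match and all matching transitions
must succeed. -/
inductive TwoStoreAcc {Q' Sig S T : Type} (A : TwoStore Q' Sig S T) :
    Q' → List (Sig × ℕ) → Prop
  | empty {q : Q'} : q ∈ A.final → TwoStoreAcc A q []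
  | ex {q : Q'} {σ : Sig} {m : ℕ} {rest : List (Sig × ℕ)} (t : T) :
      A.exQ q = true → A.src t = q → A.sym t = σ → (A.chk t).Accepts m →
      TwoStoreAcc A (A.dst t) rest →
      TwoStoreAcc A q ((σ, m) :: rest)
  | all {q : Q'} {σ : Sig} {m : ℕ} {rest : List (Sig × ℕ)} :
      A.exQ q = false →
      (∃ t : T, A.src t = q ∧ A.sym t = σ ∧ (A.chk t).Accepts m) →
      (∀ t : T, A.src t = q → A.sym t = σ → (A.chk t).Accepts m →
        TwoStoreAcc A (A.dst t) rest) →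
      TwoStoreAcc A q ((σ, m) :: rest)

/-- A set of configurations is 2-store-regular iff it is recognized (via an
embedding of the configuration states) by an alternating 2-store automaton
with finitely many states, checking automata states and transitions. -/
def TwoStoreRegular {Q Sig : Type} (C : Set (Q × List (Sig × ℕ))) : Prop :=
  ∃ (Q' S T : Type) (_ : Fintype Q') (_ : Fintype S) (_ : Fintype T)
    (A : TwoStore Q' Sig S T) (ι : Q → Q'),
    C = { c | TwoStoreAcc A (ι c.1) c.2 }

end Enc


namespace Enc

variable {Q Sig : Type}

/-- The tree `E([(⊥,m),(⊥,m)])`. -/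
def Tm (bot : Sig) : ℕ → BTree (Sig ⊕ Q)
  | 0 => .node (.inl bot) (.node (.inl bot) .nil .nil)
          (.node (.inl bot) (.node (.inl bot) .nil .nil) .nil)
  | (m+1) => .node (.inl bot) (Tm bot m) .nil

lemma enc_Tm (bot : Sig) : ∀ m, Encodes (Q := Q) bot [(bot, m), (bot, m)] (Tm bot m)
  | 0 => .zero (.zero .nil)
  | (m+1) => by
      have h := Encodes.pos (Q := Q) (bot := bot)
        (pl := [(bot, m+1), (bot, m+1)]) (pr := [])
        (by simp) (by simp) (by simp) (by simpa using enc_Tm bot m) .nil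
      simpa [Tm] using h

lemma enc_nil_unique' {bot : Sig} {p : List (Sig × ℕ)} {t : BTree (Sig ⊕ Q)}
    (h : Encodes bot p t) (hp : p = []) : t = .nil := by
  cases h with
  | nil => rfl
  | zero _ => simp at hp
  | pos hne _ _ _ _ => simp_all

lemma enc_nil_unique {bot : Sig} {t : BTree (Sig ⊕ Q)}
    (h : Encodes bot [] t) : t = .nil := enc_nil_unique' h rfl

lemma enc_one_unique' {bot : Sig} {p : List (Sig × ℕ)} {t : BTree (Sig ⊕ Q)}
    (h : Encodes bot p t) (hp : p = [(bot, 0)]) :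
    t = .node (.inl bot) (.node (.inl bot) .nil .nil) .nil := by
  cases h with
  | nil => simp at hp
  | zero h' =>
      obtain ⟨rfl, rfl⟩ : _ ∧ _ := by simpa using hp
      rw [enc_nil_unique h']
  | pos hne hge hhd h1 h2 =>
      rename_i pl pr tl tr
      cases pl with
      | nil => exact absurd rfl hne
      | cons a pla =>
        cases pla with
        | nil =>
            simp only [List.cons_append, List.nil_append, List.cons.injEq] at hp
            obtain ⟨rfl, rfl⟩ := hp
            have := hge (bot, 0) (by simp)
            simp at this
        | cons b plb => simp [List.cons_append] at hp

lemma enc_two_unique {bot : Sig} :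
    ∀ (m : ℕ) {p : List (Sig × ℕ)} {t : BTree (Sig ⊕ Q)},
    Encodes bot p t → p = [(bot, m), (bot, m)] → t = Tm bot m := by
  intro m
  induction m with
  | zero =>
      intro p t h hp
      cases h with
      | nil => simp at hp
      | zero h' =>
          obtain ⟨rfl, rfl⟩ : _ ∧ _ := by simpa using hp
          rw [Tm, enc_one_unique' h' rfl]
      | pos hne hge hhd h1 h2 =>
          rename_i pl pr tl tr
          cases pl with
          | nil => exact absurd rfl hne
          | cons a pla =>
            have hge' := hge a (by simp)
            have ha : a = (bot, 0) := by
              cases pla <;> simp only [List.cons_append, List.cons.injEq] at hp <;>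
                exact hp.1
            simp [ha] at hge'
  | succ m ih =>
      intro p t h hp
      cases h with
      | nil => simp at hp
      | zero h' =>
          simp only [List.cons.injEq, Prod.mk.injEq] at hp
          omega
      | pos hne hge hhd h1 h2 =>
          rename_i pl pr tl tr
          cases pl with
          | nil => exact absurd rfl hne
          | cons a pla =>
            cases pla with
            | nil =>
                simp only [List.cons_append, List.nil_append, List.cons.injEq] at hp
                obtain ⟨rfl, rfl⟩ := hp
                have := hhd (bot, m + 1) rfl
                simp at this
            | cons b plb =>
              cases plb with
              | nil =>
                  simp only [List.cons_append, List.nil_append, List.cons.injEq,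
                    List.append_eq_nil_iff] at hp
                  obtain ⟨rfl, rfl, rfl⟩ := hp
                  have h1' : Encodes (Q := Q) bot [(bot, m), (bot, m)] tl := by
                    simpa using h1
                  rw [Tm, ih h1' rfl, enc_nil_unique h2]
              | cons c plc =>
                  have := congrArg List.length hp
                  simp [List.length_append] at this

/-- The recognizing tree automaton. -/
def myAut (bot : Sig) (q : Q) : TreeAut (Sig ⊕ Q) (Fin 5) where
  leaf := {0}
  trans a sl sr := {s |
    (a = .inl bot ∧ sl = 0 ∧ sr = 0 ∧ s = 1) ∨
    (a = .inl bot ∧ sl = 1 ∧ sr = 0 ∧ s = 2) ∨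
    (a = .inl bot ∧ sl = 1 ∧ sr = 2 ∧ s = 3) ∨
    (a = .inl bot ∧ sl = 3 ∧ sr = 0 ∧ s = 3) ∨
    (a = .inr q ∧ sl = 3 ∧ sr = 0 ∧ s = 4)}
  accept := {4}

lemma eval_shape {bot : Sig} {q : Q} {t : BTree (Sig ⊕ Q)} {s : Fin 5}
    (h : TreeAutEval (myAut bot q) t s) :
    (s = 0 → t = .nil) ∧
    (s = 1 → t = .node (.inl bot) .nil .nil) ∧
    (s = 2 → t = .node (.inl bot) (.node (.inl bot) .nil .nil) .nil) ∧
    (s = 3 → ∃ m, t = Tm bot m) ∧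
    (s = 4 → ∃ m, t = .node (.inr q) (Tm bot m) .nil) := by
  induction h with
  | @nil s hs =>
      have hs0 : s = 0 := hs
      subst hs0
      refine ⟨fun _ => rfl, ?_, ?_, ?_, ?_⟩ <;> (intro h; exact absurd h (by decide))
  | @node a l r sl sr s hl hr hs ihl ihr =>
      rcases hs with ⟨ha, hsl, hsr, hs⟩ | ⟨ha, hsl, hsr, hs⟩ | ⟨ha, hsl, hsr, hs⟩ |
        ⟨ha, hsl, hsr, hs⟩ | ⟨ha, hsl, hsr, hs⟩ <;> subst ha <;> subst hs
      · rw [ihl.1 hsl, ihr.1 hsr]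
        exact ⟨fun h => absurd h (by decide), fun _ => rfl,
          fun h => absurd h (by decide), fun h => absurd h (by decide),
          fun h => absurd h (by decide)⟩
      · rw [ihl.2.1 hsl, ihr.1 hsr]
        exact ⟨fun h => absurd h (by decide), fun h => absurd h (by decide),
          fun _ => rfl, fun h => absurd h (by decide), fun h => absurd h (by decide)⟩
      · rw [ihl.2.1 hsl, ihr.2.2.1 hsr]
        exact ⟨fun h => absurd h (by decide), fun h => absurd h (by decide),
          fun h => absurd h (by decide), fun _ => ⟨0, rfl⟩,
          fun h => absurd h (by decide)⟩
      · obtain ⟨m, hm⟩ := ihl.2.2.2.1 hsl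
        rw [hm, ihr.1 hsr]
        exact ⟨fun h => absurd h (by decide), fun h => absurd h (by decide),
          fun h => absurd h (by decide), fun _ => ⟨m + 1, rfl⟩,
          fun h => absurd h (by decide)⟩
      · obtain ⟨m, hm⟩ := ihl.2.2.2.1 hsl
        rw [hm, ihr.1 hsr]
        exact ⟨fun h => absurd h (by decide), fun h => absurd h (by decide),
          fun h => absurd h (by decide), fun h => absurd h (by decide),
          fun _ => ⟨m, rfl⟩⟩

lemma eval_Tm (bot : Sig) (q : Q) : ∀ m, TreeAutEval (myAut bot q) (Tm bot m) (3 : Fin 5)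
  | 0 => by
      have h0 : TreeAutEval (myAut bot q) BTree.nil (0 : Fin 5) := .nil rfl
      have h1 : TreeAutEval (myAut bot q)
          (.node (.inl bot) .nil .nil) (1 : Fin 5) :=
        .node h0 h0 (Or.inl ⟨rfl, rfl, rfl, rfl⟩)
      have h2 : TreeAutEval (myAut bot q)
          (.node (.inl bot) (.node (.inl bot) .nil .nil) .nil) (2 : Fin 5) :=
        .node h1 h0 (Or.inr (Or.inl ⟨rfl, rfl, rfl, rfl⟩))
      exact .node h1 h2 (Or.inr (Or.inr (Or.inl ⟨rfl, rfl, rfl, rfl⟩)))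
  | (m+1) =>
      .node (eval_Tm bot q m) (.nil rfl)
        (Or.inr (Or.inr (Or.inr (Or.inl ⟨rfl, rfl, rfl, rfl⟩))))

/-- If two counter values are indistinguishable by every checking automaton,
acceptance is invariant under replacing the head counter. -/
lemma TwoStoreAcc.swap {Q' S T : Type} {A : TwoStore Q' Sig S T}
    {σ : Sig} {m0 m1 : ℕ} {rest : List (Sig × ℕ)} {p : Q'}
    (hiff : ∀ t, (A.chk t).Accepts m0 ↔ (A.chk t).Accepts m1)
    (h : TwoStoreAcc A p ((σ, m0) :: rest)) :
    TwoStoreAcc A p ((σ, m1) :: rest) := by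
  cases h with
  | ex t hq hs hsym hchk hrest => exact .ex t hq hs hsym ((hiff t).1 hchk) hrest
  | all hq hex hall =>
      obtain ⟨t, h1, h2, h3⟩ := hex
      exact .all hq ⟨t, h1, h2, (hiff t).1 h3⟩
        (fun t ha hb hc => hall t ha hb ((hiff t).2 hc))

end Enc

/-- The set `C = {(q, (⊥,m)(⊥,m)) : m ∈ ℕ}` of level-2
counter configurations is E-regular (its set of tree encodings is a regular
tree language) but not recognizable by any alternating 2-store automaton. -/
theorem eregular_not_twostore_regular {Q Sig : Type} (q : Q) (bot : Sig) :
    Enc.TreeRegular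
      (Enc.EncImage bot { c : Q × List (Sig × ℕ) | ∃ m : ℕ, c = (q, [(bot, m), (bot, m)]) }) ∧
    ¬ Enc.TwoStoreRegular
      { c : Q × List (Sig × ℕ) | ∃ m : ℕ, c = (q, [(bot, m), (bot, m)]) } := by
  constructor
  · -- E-regularity
    refine ⟨Fin 5, inferInstance, Enc.myAut bot q, Set.ext fun t => ?_⟩
    constructor
    · rintro ⟨c, ⟨m, rfl⟩, tp, henc, rfl⟩
      refine ⟨4, rfl, ?_⟩
      rw [Enc.enc_two_unique m henc rfl]
      exact .node (Enc.eval_Tm bot q m) (.nil rfl)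
        (Or.inr (Or.inr (Or.inr (Or.inr ⟨rfl, rfl, rfl, rfl⟩))))
    · rintro ⟨s, hs, hev⟩
      have hs4 : s = (4 : Fin 5) := hs
      subst hs4
      obtain ⟨m, rfl⟩ := (Enc.eval_shape hev).2.2.2.2 rfl
      exact ⟨(q, [(bot, m), (bot, m)]), ⟨m, rfl⟩, Enc.Tm bot m, Enc.enc_Tm bot m, rfl⟩
  · -- not 2-store regular
    rintro ⟨Q', S, T, _, _, _, A, ι, hC⟩
    obtain ⟨m0, m1, hne, heq⟩ :
        ∃ m0 m1 : ℕ, m0 ≠ m1 ∧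
          (fun t : T => (A.chk t).next^[m0] (A.chk t).init) =
          (fun t : T => (A.chk t).next^[m1] (A.chk t).init) :=
      Finite.exists_ne_map_eq_of_infinite _
    have hiff : ∀ t : T, (A.chk t).Accepts m0 ↔ (A.chk t).Accepts m1 := by
      intro t
      unfold Enc.UnaryDFA.Accepts
      rw [congrFun heq t]
    have h0 : (q, [(bot, m0), (bot, m0)]) ∈
        { c : Q × List (Sig × ℕ) | ∃ m : ℕ, c = (q, [(bot, m), (bot, m)]) } := ⟨m0, rfl⟩
    rw [hC] at h0
    have h1 : Enc.TwoStoreAcc A (ι q) [(bot, m0), (bot, m1)] := by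
      cases h0 with
      | ex t ha hb hc hd he => exact .ex t ha hb hc hd (he.swap hiff)
      | all ha hb hc =>
          exact .all ha hb (fun t x y z => (hc t x y z).swap hiff)
    have h2 : (q, [(bot, m0), (bot, m1)]) ∈
        { c : Q × List (Sig × ℕ) | ∃ m : ℕ, c = (q, [(bot, m), (bot, m)]) } := by
      rw [hC]; exact h1
    obtain ⟨m, hm⟩ := h2
    have := congrArg Prod.snd hm
    simp only [List.cons.injEq, Prod.mk.injEq] at this
    exact hne (this.1.2.trans this.2.1.2.symm)
end
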